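/- arXiv:0810.2456 — 6 statements merged into one kernel-verified Lean document; each statement's English description precedes it below -/
import Mathlib

section
/- Let β ∈ Sym(X) be simply transitive, let c ∈ F₂ be a special word with c ∉ ⟨b⟩, and let (A_n) be a pairwise disjoint Følner sequence for β. Then the set 𝒰₃ of all α ∈ Sym(X) for which there exists a subsequence (A_{n_k}) of (A_n) such that A_{n_k} ⊆ Fix(c(α,β)) for all k and (A_{n_k}) is a Følner sequence for α, is generic (comeagre) in Sym(X). Here Fix(σ) = {x ∈ X : σ(x) = x}. -/
/-- The Polish topology of pointwise convergence on `Sym(X) = Equiv.Perm X` (`X` discrete):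
the topology induced by the embedding `σ ↦ (σ, σ⁻¹)` into `X^X × X^X`, where `X` is
discrete and `X^X` carries the product topology. -/
noncomputable def symTop (X : Type*) : TopologicalSpace (Equiv.Perm X) :=
  TopologicalSpace.induced (fun σ : Equiv.Perm X => ((σ : X → X), ((σ⁻¹ : Equiv.Perm X) : X → X)))
    (@instTopologicalSpaceProd _ _ (@Pi.topologicalSpace X (fun _ => X) fun _ => ⊥)
      (@Pi.topologicalSpace X (fun _ => X) fun _ => ⊥))

/-- The evaluation homomorphism `F₂ →* Sym(X)` determined by `a ↦ α`, `b ↦ β`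
(with `a = FreeGroup.of false`, `b = FreeGroup.of true`). -/
def evMap {X : Type*} (α β : Equiv.Perm X) : FreeGroup Bool →* Equiv.Perm X :=
  FreeGroup.lift (fun x => if x then β else α)

/-- `β` is simply transitive: for all `x y` there is exactly one `n : ℤ` with `βⁿ x = y`. -/
def SimplyTransitive {X : Type*} (β : Equiv.Perm X) : Prop :=
  ∀ x y : X, ∃! n : ℤ, (β ^ n) x = y
/-- `c` is weakly cyclically reduced: in its reduced word `c = g_m ⋯ g_1` (first list entry
is the leftmost letter `g_m`), the leftmost letter is not the inverse of the rightmost one. -/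
def WeaklyCyclicallyReduced (c : FreeGroup Bool) : Prop :=
  ∀ x ∈ c.toWord.head?, ∀ y ∈ c.toWord.getLast?, x ≠ (y.1, !y.2)

/-- The exponent sum of the generator `t` in `c`: the image of `c` under the homomorphism
`F₂ → ℤ` sending `FreeGroup.of t ↦ 1` and the other generator to `0`.
(`expSum false = S_a`, `expSum true = S_b`, with `a = FreeGroup.of false`,
`b = FreeGroup.of true`.) -/
def expSum (t : Bool) (c : FreeGroup Bool) : ℤ :=
  Multiplicative.toAdd
    (FreeGroup.lift (fun x => Multiplicative.ofAdd (if x = t then (1 : ℤ) else 0)) c)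

/-- `c` is a special word: weakly cyclically reduced and either both exponent sums vanish,
or `S_a(c)` divides `S_b(c)`. -/
def IsSpecial (c : FreeGroup Bool) : Prop :=
  WeaklyCyclicallyReduced c ∧
    ((expSum false c = 0 ∧ expSum true c = 0) ∨ expSum false c ∣ expSum true c)
/-- `A` is a Følner sequence for the permutation `g`: a sequence of nonempty finite subsets
with `|A n Δ g(A n)| / |A n| → 0`. -/
def IsFolnerFor {X : Type*} [DecidableEq X] (g : Equiv.Perm X) (A : ℕ → Finset X) : Prop :=
  (∀ n, (A n).Nonempty) ∧
    Filter.Tendsto (fun n => ((symmDiff (A n) ((A n).image g)).card : ℝ) / (A n).card)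
      Filter.atTop (nhds 0)


section OpenLemmas
open Topology Filter
variable {X : Type}

local instance instXbot : TopologicalSpace X := ⊥
local instance : DiscreteTopology X := ⟨rfl⟩

theorem isOpen_apply_eq (x y : X) : IsOpen[symTop X] {α : Equiv.Perm X | α x = y} := by
  refine ⟨Prod.fst ⁻¹' ((fun f : X → X => f x) ⁻¹' ({y} : Set X)), ?_, rfl⟩
  exact IsOpen.preimage continuous_fst (IsOpen.preimage (continuous_apply x) (isOpen_discrete _))

theorem isOpen_inv_apply_eq (x y : X) : IsOpen[symTop X] {α : Equiv.Perm X | α⁻¹ x = y} := by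
  refine ⟨Prod.snd ⁻¹' ((fun f : X → X => f x) ⁻¹' ({y} : Set X)), ?_, rfl⟩
  exact IsOpen.preimage continuous_snd (IsOpen.preimage (continuous_apply x) (isOpen_discrete _))

theorem isOpen_evMap (β : Equiv.Perm X) (c : FreeGroup Bool) (x y : X) :
    IsOpen[symTop X] {α : Equiv.Perm X | evMap α β c x = y} := by
  letI : TopologicalSpace (Equiv.Perm X) := symTop X
  induction c using FreeGroup.induction_on generalizing x y with
  | C1 =>
    simp only [map_one, Equiv.Perm.one_apply]
    by_cases h : x = y
    · simp only [h, Set.setOf_true]; exact @isOpen_univ _ (symTop X)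
    · simp only [h, Set.setOf_false]; exact @isOpen_empty _ (symTop X)
  | of t =>
    have hpure : ∀ α : Equiv.Perm X, evMap α β (FreeGroup.of t) = if t then β else α := fun α =>
      FreeGroup.lift_apply_of
    cases t with
    | true =>
      simp only [hpure, if_true]
      by_cases h : β x = y
      · simp only [h, Set.setOf_true]; exact @isOpen_univ _ (symTop X)
      · simp only [h, Set.setOf_false]; exact @isOpen_empty _ (symTop X)
    | false =>
      simp only [hpure, if_false]
      exact isOpen_apply_eq x y
  | inv_of t _ =>
    have hpure : ∀ α : Equiv.Perm X, evMap α β (FreeGroup.of t)⁻¹ = (if t then β else α)⁻¹ := fun α => by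
      rw [map_inv]
      exact congrArg Inv.inv FreeGroup.lift_apply_of
    cases t with
    | true =>
      simp only [hpure, if_true]
      by_cases h : β⁻¹ x = y
      · simp only [h, Set.setOf_true]; exact @isOpen_univ _ (symTop X)
      · simp only [h, Set.setOf_false]; exact @isOpen_empty _ (symTop X)
    | false =>
      simp only [hpure, if_false]
      exact isOpen_inv_apply_eq x y
  | mul g h hg hh =>
    have key : {α : Equiv.Perm X | evMap α β (g * h) x = y} =
        ⋃ z : X, {α | evMap α β h x = z} ∩ {α | evMap α β g z = y} := by
      ext α
      simp only [Set.mem_setOf_eq, Set.mem_iUnion, Set.mem_inter_iff, map_mul,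
        Equiv.Perm.mul_apply]
      exact ⟨fun hxy => ⟨evMap α β h x, rfl, hxy⟩, fun ⟨z, hz, hzy⟩ => hz ▸ hzy⟩
    rw [key]
    exact isOpen_iUnion fun z => (hh x z).inter (hg z y)

theorem isOpen_finsetRestrict (S : Finset X) (Q : (X → X) → Prop)
    (hQ : ∀ f g : X → X, (∀ x ∈ S, f x = g x) → Q f → Q g) :
    IsOpen[symTop X] {α : Equiv.Perm X | Q ⇑α} := by
  letI : TopologicalSpace (Equiv.Perm X) := symTop X
  have key : {α : Equiv.Perm X | Q ⇑α} =
      ⋃ g ∈ {g : X → X | Q g}, {α : Equiv.Perm X | ∀ x ∈ S, α x = g x} := by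
    ext α
    simp only [Set.mem_setOf_eq, Set.mem_iUnion]
    exact ⟨fun h => ⟨⇑α, h, fun x _ => rfl⟩, fun ⟨g, hg, hag⟩ =>
      hQ g ⇑α (fun x hx => (hag x hx).symm) hg⟩
  rw [key]
  refine isOpen_biUnion fun g _ => ?_
  have h2 : {α : Equiv.Perm X | ∀ x ∈ S, α x = g x} =
      ⋂ x ∈ S, {α : Equiv.Perm X | α x = g x} := by
    ext α; simp
  rw [h2]
  exact Set.Finite.isOpen_biInter S.finite_toSet fun x _ => isOpen_apply_eq x (g x)

theorem exists_agree_mem {V : Set (Equiv.Perm X)} (hV : IsOpen[symTop X] V)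
    {α₀ : Equiv.Perm X} (hα₀ : α₀ ∈ V) :
    ∃ F : Finset X, ∀ α : Equiv.Perm X, (∀ x ∈ F, α x = α₀ x) → α ∈ V := by
  classical
  obtain ⟨W, hW, rfl⟩ := hV
  rw [isOpen_prod_iff] at hW
  obtain ⟨W₁, W₂, h1, h2, m1, m2, hsub⟩ := hW _ _ hα₀
  rw [isOpen_pi_iff] at h1 h2
  obtain ⟨I₁, u₁, hu₁, hs₁⟩ := h1 _ m1
  obtain ⟨I₂, u₂, hu₂, hs₂⟩ := h2 _ m2
  refine ⟨I₁ ∪ I₂.image ⇑α₀⁻¹, fun α hα => hsub (Set.mk_mem_prod (hs₁ ?_) (hs₂ ?_))⟩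
  · intro i hi
    rw [hα i (Finset.mem_union_left _ hi)]
    exact (hu₁ i hi).2
  · intro i hi
    have hmem : α₀⁻¹ i ∈ I₁ ∪ I₂.image ⇑α₀⁻¹ :=
      Finset.mem_union_right _ (Finset.mem_image_of_mem _ hi)
    have h3 : α (α₀⁻¹ i) = i := by rw [hα _ hmem, ← Equiv.Perm.mul_apply, mul_inv_cancel, Equiv.Perm.one_apply]
    have hinv : α⁻¹ i = α₀⁻¹ i := by
      rw [Equiv.Perm.inv_eq_iff_eq]
      exact h3.symm
    rw [hinv]
    exact (hu₂ i hi).2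
end OpenLemmas

section Ext
variable {X : Type} [Countable X] [Infinite X] [DecidableEq X]

theorem exists_perm_extend (D : Finset X) (u : X → X) (hu : Set.InjOn u ↑D) :
    ∃ α : Equiv.Perm X, ∀ x ∈ D, α x = u x := by
  classical
  have hD : (↑D : Set X).Finite := D.finite_toSet
  have hE : (u '' ↑D).Finite := hD.image u
  let f : (↑D : Set X) ≃ (u '' ↑D : Set X) := hu.bijOn_image.equiv _
  have hf : ∀ x : (↑D : Set X), (f x : X) = u x := fun x => rfl
  have h1 : (↑D : Set X)ᶜ.Infinite := hD.infinite_compl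
  have h2 : (u '' ↑D)ᶜ.Infinite := hE.infinite_compl
  haveI := h1.to_subtype
  haveI := h2.to_subtype
  obtain ⟨g⟩ : Nonempty ((↑(↑D : Set X)ᶜ : Type) ≃ ↑(u '' ↑D)ᶜ) := nonempty_equiv_of_countable
  refine ⟨(Equiv.Set.sumCompl (↑D : Set X)).symm.trans ((f.sumCongr g).trans
    (Equiv.Set.sumCompl (u '' ↑D))), fun x hx => ?_⟩
  have hmem : x ∈ (↑D : Set X) := hx
  simp only [Equiv.trans_apply]
  rw [show (Equiv.Set.sumCompl (↑D : Set X)).symm x = Sum.inl ⟨x, hmem⟩ from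
    Equiv.Set.sumCompl_symm_apply (x := ⟨x, hmem⟩)]
  simpa using hf ⟨x, hmem⟩

theorem card_symmDiff_image_pow (β : Equiv.Perm X) (A : Finset X) (j : ℕ) :
    (symmDiff A (A.image ⇑(β ^ j))).card ≤ j * (symmDiff A (A.image ⇑β)).card := by
  induction j with
  | zero => simp
  | succ j ih =>
    have himg : A.image ⇑(β ^ (j + 1)) = (A.image ⇑(β ^ j)).image ⇑β := by
      rw [Finset.image_image]
      have hcomp : ⇑β ∘ ⇑(β ^ j) = ⇑(β ^ (j + 1)) := by
        funext x
        simp [← Equiv.Perm.mul_apply, ← pow_succ']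
      rw [hcomp]
    rw [himg]
    have htri := symmDiff_triangle A (A.image ⇑β) ((A.image ⇑(β ^ j)).image ⇑β)
    have h2 : symmDiff (A.image ⇑β) ((A.image ⇑(β ^ j)).image ⇑β)
        = (symmDiff A (A.image ⇑(β ^ j))).image ⇑β :=
      (Finset.image_symmDiff _ _ β.injective).symm
    calc (symmDiff A ((A.image ⇑(β ^ j)).image ⇑β)).card
        ≤ (symmDiff A (A.image ⇑β) ∪ symmDiff (A.image ⇑β) ((A.image ⇑(β ^ j)).image ⇑β)).card :=
          Finset.card_le_card htri
      _ ≤ (symmDiff A (A.image ⇑β)).card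
          + (symmDiff (A.image ⇑β) ((A.image ⇑(β ^ j)).image ⇑β)).card :=
          Finset.card_union_le _ _
      _ ≤ (symmDiff A (A.image ⇑β)).card + j * (symmDiff A (A.image ⇑β)).card := by
          rw [h2, Finset.card_image_of_injective _ β.injective]; omega
      _ = (j + 1) * (symmDiff A (A.image ⇑β)).card := by ring

theorem card_symmDiff_image_zpow (β : Equiv.Perm X) (A : Finset X) (k : ℤ) :
    (symmDiff A (A.image ⇑(β ^ k))).card ≤ k.natAbs * (symmDiff A (A.image ⇑β)).card := by
  rcases Int.natAbs_eq k with h | h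
  · rw [h, zpow_natCast]
    exact card_symmDiff_image_pow β A k.natAbs
  · have key : (symmDiff A (A.image ⇑(β ^ k))).card
        = (symmDiff A (A.image ⇑(β ^ (k.natAbs : ℕ)))).card := by
      have h1 : ((symmDiff A (A.image ⇑(β ^ k))).image ⇑(β ^ (k.natAbs : ℕ))).card
          = (symmDiff A (A.image ⇑(β ^ k))).card :=
        Finset.card_image_of_injective _ (β ^ (k.natAbs : ℕ)).injective
      rw [← h1, Finset.image_symmDiff _ _ (β ^ (k.natAbs : ℕ)).injective]
      have h2 : (A.image ⇑(β ^ k)).image ⇑(β ^ (k.natAbs : ℕ)) = A := by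
        rw [Finset.image_image]
        have : ⇑(β ^ (k.natAbs : ℕ)) ∘ ⇑(β ^ k) = id := by
          funext x
          simp only [Function.comp_apply, id_eq, ← zpow_natCast]
          rw [← Equiv.Perm.mul_apply, ← zpow_add]
          have : (k.natAbs : ℤ) + k = 0 := by omega
          rw [this, zpow_zero, Equiv.Perm.one_apply]
        rw [this, Finset.image_id]
      rw [h2, symmDiff_comm]
    rw [key]
    exact card_symmDiff_image_pow β A k.natAbs

end Ext

def gmap {X : Type*} (α β : Equiv.Perm X) : Bool × Bool → Equiv.Perm X := fun p =>
  cond p.2 (if p.1 then β else α) (if p.1 then β else α)⁻¹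

def esum (q : ℤ) (w : List (Bool × Bool)) : ℤ :=
  (w.map fun p => (if p.1 then (1 : ℤ) else -q) * (if p.2 then 1 else -1)).sum

def sgen (t : Bool) (w : List (Bool × Bool)) : ℤ :=
  (w.map fun p => (if p.1 = t then (1 : ℤ) else 0) * (if p.2 then 1 else -1)).sum

theorem evMap_eq_prod {X : Type*} (α β : Equiv.Perm X) (c : FreeGroup Bool) :
    evMap α β c = (c.toWord.map (gmap α β)).prod := by
  conv_lhs => rw [← FreeGroup.mk_toWord (x := c)]
  rfl

theorem esum_eq (q : ℤ) (w : List (Bool × Bool)) :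
    esum q w = -q * sgen false w + sgen true w := by
  induction w with
  | nil => simp [esum, sgen]
  | cons p w ih =>
    rcases p with ⟨a, b⟩
    simp only [esum, sgen, List.map_cons, List.sum_cons] at *
    cases a <;> cases b <;> simp_all <;> ring

theorem natAbs_esum_le (q : ℤ) (w : List (Bool × Bool)) :
    (esum q w).natAbs ≤ w.length * (q.natAbs + 1) := by
  induction w with
  | nil => simp [esum]
  | cons p w ih =>
    rcases p with ⟨a, b⟩
    have h1 : esum q ((a, b) :: w)
        = (if a then (1 : ℤ) else -q) * (if b then 1 else -1) + esum q w := by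
      simp [esum]
    have h2 : ((if a then (1 : ℤ) else -q) * (if b then 1 else -1)).natAbs ≤ q.natAbs + 1 := by
      cases a <;> cases b <;> simp [Int.natAbs_neg]
    calc (esum q ((a, b) :: w)).natAbs
        ≤ ((if a then (1 : ℤ) else -q) * (if b then 1 else -1)).natAbs + (esum q w).natAbs := by
          rw [h1]; exact Int.natAbs_add_le _ _
      _ ≤ (q.natAbs + 1) + w.length * (q.natAbs + 1) := Nat.add_le_add h2 ih
      _ = ((a, b) :: w).length * (q.natAbs + 1) := by simp [List.length_cons]; ring

theorem expSum_eq_sgen (t : Bool) (c : FreeGroup Bool) : expSum t c = sgen t c.toWord := by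
  have key : ∀ w : List (Bool × Bool),
      Multiplicative.toAdd (List.prod (w.map fun x =>
        cond x.2 (Multiplicative.ofAdd (if x.1 = t then (1 : ℤ) else 0))
          (Multiplicative.ofAdd (if x.1 = t then (1 : ℤ) else 0))⁻¹)) = sgen t w := by
    intro w
    induction w with
    | nil => simp [sgen]
    | cons p w ih =>
      rcases p with ⟨a, b⟩
      simp only [List.map_cons, List.prod_cons, toAdd_mul, sgen, List.sum_cons] at *
      cases b <;> simp_all <;> ring
  rw [expSum]
  conv_lhs => rw [← FreeGroup.mk_toWord (x := c), FreeGroup.lift_mk]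
  exact key c.toWord

theorem eval_word {X : Type*} (α β : Equiv.Perm X) (q : ℤ) (x : X) (R : ℕ)
    (hα : ∀ e : ℤ, e.natAbs ≤ R → α ((β ^ e) x) = (β ^ (e - q)) x) :
    ∀ w : List (Bool × Bool), w.length * (q.natAbs + 1) ≤ R →
      ((w.map (gmap α β)).prod : Equiv.Perm X) x = (β ^ esum q w) x := by
  intro w
  induction w with
  | nil => intro _; simp [esum]
  | cons p w ih =>
    intro hlen
    have hlen' : w.length * (q.natAbs + 1) ≤ R := by
      have := hlen
      simp only [List.length_cons] at this
      nlinarith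
    have habs : (esum q w).natAbs + (q.natAbs + 1) ≤ R := by
      have h1 := natAbs_esum_le q w
      have h2 : (w.length + 1) * (q.natAbs + 1) ≤ R := by
        simpa [List.length_cons] using hlen
      nlinarith
    have hIH : ((w.map (gmap α β)).prod : Equiv.Perm X) x = (β ^ esum q w) x := ih hlen'
    have hprod : ((p :: w).map (gmap α β)).prod = gmap α β p * (w.map (gmap α β)).prod := by
      simp
    rw [hprod, Equiv.Perm.mul_apply, hIH]
    set e := esum q w with he
    have hesum : esum q (p :: w)
        = (if p.1 then (1 : ℤ) else -q) * (if p.2 then 1 else -1) + e := by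
      simp [esum, he]
    have hzz : ∀ a b : ℤ, (β ^ a) ((β ^ b) x) = (β ^ (a + b)) x := fun a b => by
      rw [← Equiv.Perm.mul_apply, ← zpow_add]
    rcases p with ⟨a, b⟩
    cases a <;> cases b
    · -- letter a⁻¹ : gmap = α⁻¹
      have hE : esum q ((false, false) :: w) = e + q := by rw [hesum]; simp; try ring
      have h1 : α ((β ^ (e + q)) x) = (β ^ e) x := by
        have h2 := hα (e + q) (by omega)
        rwa [show e + q - q = e by ring] at h2
      rw [hE]
      show α⁻¹ ((β ^ e) x) = (β ^ (e + q)) x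
      rw [← h1, ← Equiv.Perm.mul_apply, inv_mul_cancel, Equiv.Perm.one_apply]
    · -- letter a : gmap = α
      have hE : esum q ((false, true) :: w) = e + -q := by rw [hesum]; simp; try ring
      rw [hE, show e + -q = e - q by ring]
      show α ((β ^ e) x) = (β ^ (e - q)) x
      exact hα e (by omega)
    · -- letter b⁻¹ : gmap = β⁻¹
      have hE : esum q ((true, false) :: w) = -1 + e := by rw [hesum]; simp; try ring
      rw [hE]
      show β⁻¹ ((β ^ e) x) = (β ^ (-1 + e)) x
      rw [← hzz (-1) e, zpow_neg_one]
    · -- letter b : gmap = β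
      have hE : esum q ((true, true) :: w) = 1 + e := by rw [hesum]; simp; try ring
      rw [hE]
      show β ((β ^ e) x) = (β ^ (1 + e)) x
      rw [← hzz 1 e, zpow_one]

section Main
open Filter
variable {X : Type} [Countable X] [Infinite X] [DecidableEq X]

theorem perm_zpow_apply (β : Equiv.Perm X) (a b : ℤ) (x : X) :
    (β ^ a) ((β ^ b) x) = (β ^ (a + b)) x := by
  rw [← Equiv.Perm.mul_apply, ← zpow_add]

theorem eventually_disjoint (A : ℕ → Finset X)
    (hdisj : Pairwise (Function.onFun Disjoint A)) (T : Finset X) :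
    ∀ᶠ n in atTop, Disjoint (A n) T := by
  classical
  rw [← Nat.cofinite_eq_atTop, Filter.eventually_cofinite]
  set S := {n : ℕ | ¬ Disjoint (A n) T} with hSdef
  have hS : ∀ n ∈ S, ∃ x, x ∈ A n ∧ x ∈ T := fun n hn => Finset.not_disjoint_iff.1 hn
  let f : ℕ → X := fun n => if h : n ∈ S then (hS n h).choose else Classical.arbitrary X
  have hf : ∀ n ∈ S, f n ∈ A n ∧ f n ∈ T := fun n hn => by
    simp only [f, dif_pos hn]; exact (hS n hn).choose_spec
  apply Set.Finite.of_finite_image (f := f)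
  · exact T.finite_toSet.subset (by rintro _ ⟨n, hn, rfl⟩; exact (hf n hn).2)
  · intro n₁ h₁ n₂ h₂ heq
    by_contra hne
    exact Finset.disjoint_left.1 (hdisj hne) (hf n₁ h₁).1 (heq ▸ (hf n₂ h₂).1)

theorem density_core (β : Equiv.Perm X) (c : FreeGroup Bool) (q : ℤ)
    (hq : expSum true c = expSum false c * q)
    (A : ℕ → Finset X) (hdisj : Pairwise (Function.onFun Disjoint A))
    (hA : IsFolnerFor β A) (m : ℕ) (F : Finset X) (α₀ : Equiv.Perm X) :
    ∃ α : Equiv.Perm X, (∀ x ∈ F, α x = α₀ x) ∧ ∃ n, m ≤ n ∧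
      (∀ x ∈ A n, evMap α β c x = x) ∧
      ((symmDiff (A n) ((A n).image ⇑α)).card : ℝ) < (A n).card / (m + 1) := by
  classical
  set L := c.toWord.length with hL
  set R : ℕ := (L + 1) * (q.natAbs + 1) with hR
  set R2 : ℕ := R + q.natAbs with hR2
  set G : Finset X := F ∪ F.image ⇑α₀ with hG
  set T : Finset X := ((Finset.Icc (-(R2:ℤ)) (R2:ℤ)) ×ˢ G).image (fun p => (β ^ p.1) p.2) with hT
  have ev1 : ∀ᶠ n in atTop, m ≤ n := eventually_ge_atTop m
  have ev2 : ∀ᶠ n in atTop, ((symmDiff (A n) ((A n).image ⇑β)).card : ℝ)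
      < (A n).card * (1 / (((m : ℝ) + 1) * ((q.natAbs : ℝ) + 1))) := by
    have hε : (0:ℝ) < 1 / (((m : ℝ) + 1) * ((q.natAbs : ℝ) + 1)) := by positivity
    filter_upwards [hA.2.eventually (gt_mem_nhds hε)] with n hn
    have ha : (0:ℝ) < (A n).card := by exact_mod_cast Finset.card_pos.mpr (hA.1 n)
    calc ((symmDiff (A n) ((A n).image ⇑β)).card : ℝ)
        = (symmDiff (A n) ((A n).image ⇑β)).card / (A n).card * (A n).card := by
          field_simp
      _ < 1 / (((m : ℝ) + 1) * ((q.natAbs : ℝ) + 1)) * (A n).card :=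
          mul_lt_mul_of_pos_right hn ha
      _ = (A n).card * (1 / (((m : ℝ) + 1) * ((q.natAbs : ℝ) + 1))) := by ring
  obtain ⟨n, hn1, hn2, hn3⟩ := (ev1.and (ev2.and (eventually_disjoint A hdisj T))).exists
  set B : Finset X := ((Finset.Icc (-(R:ℤ)) (R:ℤ)) ×ˢ A n).image (fun p => (β ^ p.1) p.2) with hB
  have hmemB : ∀ x ∈ A n, ∀ e : ℤ, e.natAbs ≤ R → (β ^ e) x ∈ B := by
    intro x hx e heR
    refine Finset.mem_image.2 ⟨(e, x), ?_, rfl⟩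
    rw [Finset.mem_product, Finset.mem_Icc]
    exact ⟨by omega, hx⟩
  have hBG : ∀ (k : ℤ), k.natAbs ≤ R2 → ∀ x ∈ A n, (β ^ k) x ∉ G := by
    intro k hk x hx hmemG
    have hxT : x ∈ T := by
      refine Finset.mem_image.2 ⟨(-k, (β ^ k) x), ?_, ?_⟩
      · rw [Finset.mem_product, Finset.mem_Icc]
        exact ⟨by omega, hmemG⟩
      · rw [perm_zpow_apply, neg_add_cancel, zpow_zero, Equiv.Perm.one_apply]
    exact Finset.disjoint_left.1 hn3 hx hxT
  have hBex : ∀ y ∈ B, ∃ (j : ℤ) (x : X), x ∈ A n ∧ j.natAbs ≤ R ∧ y = (β ^ j) x := by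
    intro y hy
    obtain ⟨⟨j, x⟩, hjx, rfl⟩ := Finset.mem_image.1 hy
    rw [Finset.mem_product, Finset.mem_Icc] at hjx
    exact ⟨j, x, hjx.2, by omega, rfl⟩
  set u : X → X := fun z => if z ∈ F then α₀ z else (β ^ (-q : ℤ)) z with hu
  set D : Finset X := F ∪ B with hD
  have hBnotF : ∀ y ∈ B, y ∉ F := by
    intro y hy hyF
    obtain ⟨j, x, hx, hj, rfl⟩ := hBex y hy
    exact hBG j (by omega) x hx (Finset.mem_union_left _ hyF)
  have hBnotG : ∀ y ∈ B, (β ^ (-q : ℤ)) y ∉ G := by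
    intro y hy
    obtain ⟨j, x, hx, hj, rfl⟩ := hBex y hy
    rw [perm_zpow_apply]
    exact hBG (-q + j) (by omega) x hx
  have huF : ∀ z ∈ F, u z = α₀ z := fun z hz => by simp only [hu, if_pos hz]
  have huB : ∀ y ∈ B, u y = (β ^ (-q : ℤ)) y := fun y hy => by
    simp only [hu, if_neg (hBnotF y hy)]
  have hInj : Set.InjOn u ↑D := by
    intro x₁ h₁ x₂ h₂ heq
    have h₁' : x₁ ∈ F ∪ B := h₁
    have h₂' : x₂ ∈ F ∪ B := h₂
    rw [Finset.mem_union] at h₁' h₂'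
    by_cases hx₁ : x₁ ∈ F <;> by_cases hx₂ : x₂ ∈ F
    · exact α₀.injective (by rwa [huF x₁ hx₁, huF x₂ hx₂] at heq)
    · exfalso
      have hx₂B : x₂ ∈ B := h₂'.resolve_left hx₂
      rw [huF x₁ hx₁, huB x₂ hx₂B] at heq
      exact hBnotG x₂ hx₂B (heq ▸ Finset.mem_union_right _ (Finset.mem_image_of_mem _ hx₁))
    · exfalso
      have hx₁B : x₁ ∈ B := h₁'.resolve_left hx₁
      rw [huB x₁ hx₁B, huF x₂ hx₂] at heq
      exact hBnotG x₁ hx₁B (heq.symm ▸ Finset.mem_union_right _ (Finset.mem_image_of_mem _ hx₂))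
    · have hx₁B : x₁ ∈ B := h₁'.resolve_left hx₁
      have hx₂B : x₂ ∈ B := h₂'.resolve_left hx₂
      rw [huB x₁ hx₁B, huB x₂ hx₂B] at heq
      exact (β ^ (-q : ℤ)).injective heq
  obtain ⟨α, hα⟩ := exists_perm_extend D u hInj
  have hαF : ∀ z ∈ F, α z = α₀ z := fun z hz => by
    rw [hα z (Finset.mem_union_left _ hz), huF z hz]
  have hαB : ∀ y ∈ B, α y = (β ^ (-q : ℤ)) y := fun y hy => by
    rw [hα y (Finset.mem_union_right _ hy), huB y hy]
  have hkey : ∀ x ∈ A n, ∀ e : ℤ, e.natAbs ≤ R → α ((β ^ e) x) = (β ^ (e - q)) x := by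
    intro x hx e he
    rw [hαB _ (hmemB x hx e he), perm_zpow_apply]
    congr 1
    ring
  have hfix : ∀ x ∈ A n, evMap α β c x = x := by
    intro x hx
    rw [evMap_eq_prod]
    rw [eval_word α β q x R (hkey x hx) c.toWord (by rw [hR]; exact Nat.mul_le_mul_right _ (Nat.le_succ _))]
    have hE0 : esum q c.toWord = 0 := by
      rw [esum_eq, ← expSum_eq_sgen, ← expSum_eq_sgen, hq]
      ring
    rw [hE0, zpow_zero, Equiv.Perm.one_apply]
  have hAB : ∀ x ∈ A n, x ∈ B := by
    intro x hx
    have h0 := hmemB x hx 0 (by simp)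
    rwa [zpow_zero, Equiv.Perm.one_apply] at h0
  have himg : (A n).image ⇑α = (A n).image ⇑(β ^ (-q : ℤ)) :=
    Finset.image_congr (fun x hx => hαB x (hAB x hx))
  have hcard : (symmDiff (A n) ((A n).image ⇑α)).card
      ≤ (q.natAbs + 1) * (symmDiff (A n) ((A n).image ⇑β)).card := by
    rw [himg]
    calc (symmDiff (A n) ((A n).image ⇑(β ^ (-q : ℤ)))).card
        ≤ (-q : ℤ).natAbs * (symmDiff (A n) ((A n).image ⇑β)).card :=
          card_symmDiff_image_zpow β (A n) (-q)
      _ ≤ (q.natAbs + 1) * (symmDiff (A n) ((A n).image ⇑β)).card := by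
          rw [Int.natAbs_neg]
          exact Nat.mul_le_mul_right _ (Nat.le_succ _)
  refine ⟨α, hαF, n, hn1, hfix, ?_⟩
  have ha : (0:ℝ) < (A n).card := by exact_mod_cast Finset.card_pos.mpr (hA.1 n)
  have hm1 : (0:ℝ) < (m : ℝ) + 1 := by positivity
  have hq1 : (0:ℝ) < (q.natAbs : ℝ) + 1 := by positivity
  calc ((symmDiff (A n) ((A n).image ⇑α)).card : ℝ)
      ≤ ((q.natAbs : ℝ) + 1) * (symmDiff (A n) ((A n).image ⇑β)).card := by
        exact_mod_cast hcard
    _ < ((q.natAbs : ℝ) + 1) * ((A n).card * (1 / (((m : ℝ) + 1) * ((q.natAbs : ℝ) + 1)))) :=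
        mul_lt_mul_of_pos_left hn2 hq1
    _ = (A n).card / ((m : ℝ) + 1) := by
        field_simp
end Main
section Final
open Filter Topology
variable {X : Type} [Countable X] [Infinite X] [DecidableEq X]

/-- The auxiliary open dense sets. -/
def Uset (β : Equiv.Perm X) (c : FreeGroup Bool) (A : ℕ → Finset X) (m : ℕ) :
    Set (Equiv.Perm X) :=
  {α : Equiv.Perm X | ∃ n, m ≤ n ∧ (∀ x ∈ A n, evMap α β c x = x) ∧
    ((symmDiff (A n) ((A n).image ⇑α)).card : ℝ) < (A n).card / (m + 1)}

theorem Uset_open (β : Equiv.Perm X) (c : FreeGroup Bool) (A : ℕ → Finset X) (m : ℕ) :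
    IsOpen[symTop X] (Uset β c A m) := by
  letI : TopologicalSpace (Equiv.Perm X) := symTop X
  have key : Uset β c A m = ⋃ n, ⋃ (_ : m ≤ n),
      ((⋂ x ∈ (A n : Finset X), {α : Equiv.Perm X | evMap α β c x = x}) ∩
        {α : Equiv.Perm X |
          ((symmDiff (A n) ((A n).image ⇑α)).card : ℝ) < (A n).card / (m + 1)}) := by
    ext α
    simp only [Uset, Set.mem_setOf_eq, Set.mem_iUnion, Set.mem_inter_iff, Set.mem_iInter]
    constructor
    · rintro ⟨n, h1, h2, h3⟩; exact ⟨n, h1, h2, h3⟩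
    · rintro ⟨n, h1, h2, h3⟩; exact ⟨n, h1, h2, h3⟩
  rw [key]
  refine isOpen_iUnion fun n => isOpen_iUnion fun _ => IsOpen.inter ?_ ?_
  · exact Set.Finite.isOpen_biInter (A n).finite_toSet fun x _ => isOpen_evMap β c x x
  · refine isOpen_finsetRestrict (A n)
      (fun f => ((symmDiff (A n) ((A n).image f)).card : ℝ) < (A n).card / (m + 1)) ?_
    intro f g hfg h
    rwa [show (A n).image g = (A n).image f from
      Finset.image_congr fun x hx => (hfg x hx).symm]

theorem Uset_dense (β : Equiv.Perm X) (c : FreeGroup Bool) (q : ℤ)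
    (hq : expSum true c = expSum false c * q)
    (A : ℕ → Finset X) (hdisj : Pairwise (Function.onFun Disjoint A))
    (hA : IsFolnerFor β A) (m : ℕ) :
    @Dense _ (symTop X) (Uset β c A m) := by
  letI : TopologicalSpace (Equiv.Perm X) := symTop X
  rw [dense_iff_inter_open]
  rintro V hV ⟨α₀, hα₀⟩
  obtain ⟨F, hF⟩ := exists_agree_mem hV hα₀
  obtain ⟨α, hαF, n, hn, hfix, hlt⟩ := density_core β c q hq A hdisj hA m F α₀
  exact ⟨α, hF α hαF, n, hn, hfix, hlt⟩

end Final

def lvlAux (nf : ℕ → ℕ) : ℕ → ℕ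
  | 0 => 0
  | k + 1 => max (nf (lvlAux nf k) + 1) (k + 1)

/-- Proposition 3.3: for `β` simply transitive, `c` a special word with `c ∉ ⟨b⟩`, and `(A_n)`
a pairwise disjoint Følner sequence for `β`, the set `𝒰₃` of those `α` admitting a
subsequence `(A_{n_k})` with `A_{n_k} ⊆ Fix(c(α,β))` for all `k` which is a Følner sequence
for `α`, is comeagre in `Sym(X)`. -/
theorem U3_generic {X : Type} [Countable X] [Infinite X] [DecidableEq X]
    (β : Equiv.Perm X) (hβ : SimplyTransitive β)
    (c : FreeGroup Bool) (hc : IsSpecial c)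
    (hcb : c ∉ Subgroup.zpowers (FreeGroup.of true))
    (A : ℕ → Finset X) (hdisj : Pairwise (Function.onFun Disjoint A))
    (hA : IsFolnerFor β A) :
    {α : Equiv.Perm X | ∃ n : ℕ → ℕ, StrictMono n ∧
        (∀ k : ℕ, ∀ x ∈ A (n k), evMap α β c x = x) ∧
        IsFolnerFor α (fun k => A (n k))} ∈ @residual (Equiv.Perm X) (symTop X) := by
  classical
  letI : TopologicalSpace (Equiv.Perm X) := symTop X
  obtain ⟨q, hq⟩ : expSum false c ∣ expSum true c := by
    rcases hc.2 with ⟨h1, h2⟩ | h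
    · rw [h1, h2]
    · exact h
  rw [mem_residual_iff]
  refine ⟨Set.range (fun m => Uset β c A m), ?_, ?_, Set.countable_range _, ?_⟩
  · rintro t ⟨m, rfl⟩
    exact Uset_open β c A m
  · rintro t ⟨m, rfl⟩
    exact Uset_dense β c q hq A hdisj hA m
  · intro α hα
    have h : ∀ m, α ∈ Uset β c A m := fun m => hα _ ⟨m, rfl⟩
    choose nf hnf1 hnf2 hnf3 using h
    set lvl : ℕ → ℕ := lvlAux nf with hlvl
    have hlvl_succ : ∀ k, lvl (k + 1) = max (nf (lvl k) + 1) (k + 1) := fun k => rfl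
    have hk_le : ∀ k, k ≤ lvl k := by
      intro k
      cases k with
      | zero => exact le_rfl
      | succ k => rw [hlvl_succ]; exact le_max_right _ _
    refine ⟨fun k => nf (lvl k), ?_, fun k => hnf2 (lvl k), fun k => hA.1 _, ?_⟩
    · apply strictMono_nat_of_lt_succ
      intro k
      have h1 : nf (lvl k) + 1 ≤ lvl (k + 1) := by rw [hlvl_succ]; exact le_max_left _ _
      exact Nat.lt_of_lt_of_le (Nat.lt_succ_self _) (h1.trans (hnf1 _))
    · apply squeeze_zero (g := fun k : ℕ => 1 / ((k : ℝ) + 1))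
      · intro k
        positivity
      · intro k
        set N := nf (lvl k)
        have ha : (0:ℝ) < (A N).card := by exact_mod_cast Finset.card_pos.mpr (hA.1 N)
        have hb := hnf3 (lvl k)
        have hd0 : (0:ℝ) ≤ ((symmDiff (A N) ((A N).image ⇑α)).card : ℝ) := by positivity
        have hlk : ((k : ℝ) + 1) ≤ ((lvl k : ℝ) + 1) := by
          have h6 : (k : ℝ) ≤ (lvl k : ℝ) := Nat.cast_le.mpr (hk_le k)
          linarith
        rw [div_le_div_iff₀ ha (by positivity : (0:ℝ) < (k : ℝ) + 1)]
        have h4 : ((symmDiff (A N) ((A N).image ⇑α)).card : ℝ) * ((k : ℝ) + 1)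
            ≤ ((symmDiff (A N) ((A N).image ⇑α)).card : ℝ) * ((lvl k : ℝ) + 1) :=
          mul_le_mul_of_nonneg_left hlk hd0
        have h5 : ((symmDiff (A N) ((A N).image ⇑α)).card : ℝ) * ((lvl k : ℝ) + 1)
            < (A N).card := by
          rw [← lt_div_iff₀ (by positivity : (0:ℝ) < (lvl k : ℝ) + 1)]
          exact hb
        calc ((symmDiff (A N) ((A N).image ⇑α)).card : ℝ) * ((k : ℝ) + 1)
            ≤ _ := h4
          _ ≤ 1 * ((A N).card : ℝ) := by rw [one_mul]; exact h5.le
      · exact tendsto_one_div_add_atTop_nhds_zero_nat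
end

section
/- Let β ∈ Sym(X) be simply transitive. Then the set 𝒰₄ of all α ∈ Sym(X) such that every finite-index subgroup H of the subgroup ⟨α, β⟩ ≤ Sym(X) acts transitively on X (i.e. for all x, y ∈ X there is h ∈ H with h(x) = y) is generic (comeagre) in Sym(X). -/
lemma evMap_mem_closure (α β : Equiv.Perm X) (w : FreeGroup Bool) :
    evMap α β w ∈ Subgroup.closure ({α, β} : Set (Equiv.Perm X)) := by
  have h : ({α, β} : Set (Equiv.Perm X)) = Set.range (fun x : Bool => if x then β else α) := by
    ext g
    constructor
    · rintro (rfl | rfl)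
      · exact ⟨false, rfl⟩
      · exact ⟨true, rfl⟩
    · rintro ⟨(_ | _), rfl⟩
      · exact Or.inl rfl
      · exact Or.inr rfl
  rw [h, ← FreeGroup.range_lift_eq_closure]
  exact ⟨w, rfl⟩

lemma isOpen_word (β : Equiv.Perm X) (w : FreeGroup Bool) (x y : X) :
    @IsOpen _ (symTop X) {α : Equiv.Perm X | (evMap α β w) x = y} := by
  letI : TopologicalSpace X := ⊥
  haveI : DiscreteTopology X := ⟨rfl⟩
  letI T := symTop X
  have hc : @Continuous _ _ (symTop X) _
      (fun α : Equiv.Perm X => ((α : X → X), ((α⁻¹ : Equiv.Perm X) : X → X))) :=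
    continuous_induced_dom
  have h1 : ∀ x y : X, @IsOpen _ (symTop X) {α : Equiv.Perm X | α x = y} := by
    intro x y
    have : Continuous fun α : Equiv.Perm X => (α : X → X) x :=
      ((continuous_apply x).comp continuous_fst).comp hc
    exact this.isOpen_preimage {y} (isOpen_discrete _)
  have h2 : ∀ x y : X, @IsOpen _ (symTop X) {α : Equiv.Perm X | α⁻¹ x = y} := by
    intro x y
    have : Continuous fun α : Equiv.Perm X => ((α⁻¹ : Equiv.Perm X) : X → X) x :=
      ((continuous_apply x).comp continuous_snd).comp hc
    exact this.isOpen_preimage {y} (isOpen_discrete _)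
  induction w using FreeGroup.induction_on generalizing x y with
  | C1 =>
    simp only [map_one, Equiv.Perm.one_apply]
    rcases eq_or_ne x y with rfl | hxy
    · simpa using (isOpen_univ : @IsOpen _ (symTop X) Set.univ)
    · have : {_α : Equiv.Perm X | x = y} = ∅ :=
        Set.eq_empty_iff_forall_notMem.2 fun _ hm => hxy hm
      rw [this]; exact isOpen_empty
  | of b =>
    cases b
    · have h' : ∀ α : Equiv.Perm X, evMap α β (FreeGroup.of false : FreeGroup Bool) = α :=
        fun α => FreeGroup.lift_apply_of
      simp only [h']
      exact h1 x y
    · have h' : ∀ α : Equiv.Perm X, evMap α β (FreeGroup.of true : FreeGroup Bool) = β :=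
        fun α => FreeGroup.lift_apply_of
      simp only [h']
      rcases eq_or_ne (β x) y with h | h
      · simpa [h] using (isOpen_univ : @IsOpen _ (symTop X) Set.univ)
      · have : {_α : Equiv.Perm X | β x = y} = ∅ :=
          Set.eq_empty_iff_forall_notMem.2 fun _ hm => h hm
        rw [this]; exact isOpen_empty
  | inv_of b _ =>
    cases b
    · have h' : ∀ α : Equiv.Perm X, evMap α β ((FreeGroup.of false : FreeGroup Bool))⁻¹ = α⁻¹ := by
        intro α
        rw [map_inv]
        exact congrArg Inv.inv (FreeGroup.lift_apply_of)
      simp only [h']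
      exact h2 x y
    · have h' : ∀ α : Equiv.Perm X, evMap α β ((FreeGroup.of true : FreeGroup Bool))⁻¹ = β⁻¹ := by
        intro α
        rw [map_inv]
        exact congrArg Inv.inv (FreeGroup.lift_apply_of)
      simp only [h']
      rcases eq_or_ne (β⁻¹ x) y with h | h
      · simpa [h] using (isOpen_univ : @IsOpen _ (symTop X) Set.univ)
      · have : {_α : Equiv.Perm X | β⁻¹ x = y} = ∅ :=
          Set.eq_empty_iff_forall_notMem.2 fun _ hm => h hm
        rw [this]; exact isOpen_empty
  | mul w₁ w₂ ih₁ ih₂ =>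
    have hset : {α : Equiv.Perm X | (evMap α β (w₁ * w₂)) x = y} =
        ⋃ z : X, {α : Equiv.Perm X | (evMap α β w₂) x = z} ∩
          {α : Equiv.Perm X | (evMap α β w₁) z = y} := by
      ext α
      simp only [Set.mem_iUnion, Set.mem_inter_iff, Set.mem_setOf_eq, map_mul,
        Equiv.Perm.mul_apply]
      exact ⟨fun h => ⟨_, rfl, h⟩, by rintro ⟨z, rfl, h⟩; exact h⟩
    rw [hset]
    exact isOpen_iUnion fun z => (ih₂ x z).inter (ih₁ z y)


lemma nhds_basis_perm {X : Type*} (α₀ : Equiv.Perm X) (U : Set (Equiv.Perm X))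
    (hU : U ∈ @nhds _ (symTop X) α₀) :
    ∃ s : Finset X, ∀ σ : Equiv.Perm X,
      (∀ z ∈ s, σ z = α₀ z ∧ σ⁻¹ z = α₀⁻¹ z) → σ ∈ U := by
  classical
  letI : TopologicalSpace X := ⊥
  haveI : DiscreteTopology X := ⟨rfl⟩
  set e : Equiv.Perm X → (X → X) × (X → X) :=
    fun σ => ((σ : X → X), ((σ⁻¹ : Equiv.Perm X) : X → X)) with he
  have : @nhds _ (symTop X) α₀ = Filter.comap e (nhds (e α₀)) := by
    rw [show symTop X = TopologicalSpace.induced e inferInstance from rfl]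
    exact nhds_induced e α₀
  rw [this, Filter.mem_comap] at hU
  obtain ⟨V, hV, hVU⟩ := hU
  rw [show e α₀ = ((α₀ : X → X), ((α₀⁻¹ : Equiv.Perm X) : X → X)) from rfl, nhds_prod_eq] at hV
  rw [Filter.mem_prod_iff] at hV
  obtain ⟨V₁, hV₁, V₂, hV₂, hV12⟩ := hV
  rw [nhds_pi] at hV₁ hV₂
  simp only [nhds_discrete] at hV₁ hV₂
  rw [Filter.mem_pi] at hV₁ hV₂
  obtain ⟨I₁, hI₁, t₁, ht₁, hts₁⟩ := hV₁
  obtain ⟨I₂, hI₂, t₂, ht₂, hts₂⟩ := hV₂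
  refine ⟨(hI₁.union hI₂).toFinset, fun σ hσ => ?_⟩
  apply hVU
  apply hV12
  constructor
  · apply hts₁
    intro i hi
    show (e σ).1 i ∈ t₁ i
    have h' : (e σ).1 i = α₀ i := (hσ i (by simp [Set.Finite.mem_toFinset, hi])).1
    rw [h']
    exact ht₁ i
  · apply hts₂
    intro i hi
    show (e σ).2 i ∈ t₂ i
    have h' : (e σ).2 i = α₀⁻¹ i := (hσ i (by simp [Set.Finite.mem_toFinset, hi])).2
    rw [h']
    exact ht₂ i

lemma dense_D {X : Type} [Countable X] [Infinite X] (β : Equiv.Perm X)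
    (hβ : SimplyTransitive β) (k : ℕ) (x y : X) :
    @Dense _ (symTop X) {α : Equiv.Perm X | ∃ w : FreeGroup Bool,
      ((evMap α β w) ^ (k + 1)) x = y} := by
  classical
  intro α₀
  rw [@mem_closure_iff_nhds _ (symTop X)]
  intro U hU
  obtain ⟨s, hs⟩ := nhds_basis_perm α₀ U hU
  rcases eq_or_ne x y with rfl | hxy
  · exact ⟨α₀, hs α₀ (fun z _ => ⟨rfl, rfl⟩), ⟨1, by simp⟩⟩
  set s' : Finset X := s ∪ s.image (⇑α₀⁻¹) with hs'
  set F : Finset X := s'.image ⇑α₀ with hF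
  have hinj : ∀ z : X, Function.Injective fun n : ℤ => (β ^ n) z := by
    intro z n m h
    exact (hβ z ((β ^ n) z)).unique rfl h.symm
  -- choose m with v₁, v₂ fresh
  have hfin : ∀ z : X, {n : ℤ | (β ^ n) z ∈ (F : Set X)}.Finite := fun z =>
    Set.Finite.preimage (hinj z).injOn F.finite_toSet
  obtain ⟨m, hm⟩ := (((hfin x).union (hfin y)).infinite_compl).nonempty
  simp only [Set.mem_compl_iff, Set.mem_union, Set.mem_setOf_eq, not_or] at hm
  set v₁ := (β ^ m) x with hv₁
  set v₂ := (β ^ m) y with hv₂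
  have hv₁F : v₁ ∉ F := fun h => hm.1 (Finset.mem_coe.mpr h)
  have hv₂F : v₂ ∉ F := fun h => hm.2 (Finset.mem_coe.mpr h)
  have hv12 : v₁ ≠ v₂ := fun h => hxy ((β ^ m).injective h)
  -- choose c fresh
  set K := k + 1 with hK
  have hfin2 : ((s' : Set X) ∪ (⇑(β ^ K)) ⁻¹' (s' : Set X) ∪ (⇑α₀) ⁻¹' {v₁, v₂} ∪
      (⇑α₀ ∘ ⇑(β ^ K)) ⁻¹' {v₁, v₂}).Finite := by
    refine ((Set.Finite.union (Set.Finite.union ?_ ?_) ?_).union ?_)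
    · exact s'.finite_toSet
    · exact Set.Finite.preimage (β ^ K).injective.injOn s'.finite_toSet
    · exact Set.Finite.preimage α₀.injective.injOn ((Set.finite_singleton v₂).insert v₁)
    · exact Set.Finite.preimage (α₀.injective.comp (β ^ K).injective).injOn
        ((Set.finite_singleton v₂).insert v₁)
  obtain ⟨c, hc⟩ := hfin2.infinite_compl.nonempty
  simp only [Set.mem_compl_iff, Set.mem_union, Set.mem_preimage, Function.comp_apply,
    Set.mem_insert_iff, Set.mem_singleton_iff, not_or] at hc
  obtain ⟨⟨⟨hcs', hds'⟩, hcv⟩, hdv⟩ := hc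
  set d := (β ^ K) c with hd
  have hcd : c ≠ d := by
    intro h
    have h2 : (β ^ (K : ℤ)) c = (β ^ (0 : ℤ)) c := by
      rw [zpow_natCast, zpow_zero, ← hd, ← h, Equiv.Perm.one_apply]
    have := hinj c h2
    omega
  set w₁ := α₀ c with hw₁
  set w₂ := α₀ d with hw₂
  have hw12 : w₁ ≠ w₂ := fun h => hcd (α₀.injective h)
  set τ : Equiv.Perm X := Equiv.swap w₁ v₁ * Equiv.swap w₂ v₂ with hτ
  set α : Equiv.Perm X := τ * α₀ with hα
  have fact1 : ∀ z ∈ s', α z = α₀ z := by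
    intro z hz
    have h1 : α₀ z ≠ w₂ := fun h => hds' (Finset.mem_coe.mpr ((α₀.injective h) ▸ hz))
    have h2 : α₀ z ≠ v₂ := fun h => hv₂F (h ▸ Finset.mem_image_of_mem _ hz)
    have h3 : α₀ z ≠ w₁ := fun h => hcs' (Finset.mem_coe.mpr ((α₀.injective h) ▸ hz))
    have h4 : α₀ z ≠ v₁ := fun h => hv₁F (h ▸ Finset.mem_image_of_mem _ hz)
    have : α z = (Equiv.swap w₁ v₁) ((Equiv.swap w₂ v₂) (α₀ z)) := rfl
    rw [this, Equiv.swap_apply_of_ne_of_ne h1 h2, Equiv.swap_apply_of_ne_of_ne h3 h4]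
  have fact2 : α c = v₁ := by
    have : α c = (Equiv.swap w₁ v₁) ((Equiv.swap w₂ v₂) w₁) := rfl
    rw [this, Equiv.swap_apply_of_ne_of_ne hw12 hcv.2, Equiv.swap_apply_left]
  have fact3 : α d = v₂ := by
    have : α d = (Equiv.swap w₁ v₁) ((Equiv.swap w₂ v₂) w₂) := rfl
    rw [this, Equiv.swap_apply_left,
      Equiv.swap_apply_of_ne_of_ne (fun h => hcv.2 h.symm) (fun h => hv12 h.symm)]
  refine ⟨α, hs α (fun z hz => ⟨fact1 z (Finset.mem_union_left _ hz), ?_⟩), ?_⟩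
  · -- inverses agree on s
    have hz' : α₀⁻¹ z ∈ s' := Finset.mem_union_right _ (Finset.mem_image_of_mem _ hz)
    have h1 : α (α₀⁻¹ z) = z := by rw [fact1 _ hz']; exact α₀.apply_symm_apply z
    calc α⁻¹ z = α⁻¹ (α (α₀⁻¹ z)) := by rw [h1]
      _ = α₀⁻¹ z := α.symm_apply_apply _
  · -- α is in the dense set
    set u : FreeGroup Bool := (FreeGroup.of true) ^ (-m) * FreeGroup.of false with hu
    have hof_t : evMap α β (FreeGroup.of true) = β := by
      have : evMap α β (FreeGroup.of true) = if true then β else α := FreeGroup.lift_apply_of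
      simpa using this
    have hof_f : evMap α β (FreeGroup.of false) = α := by
      have : evMap α β (FreeGroup.of false) = if false then β else α := FreeGroup.lift_apply_of
      simpa using this
    set δ : Equiv.Perm X := β ^ (-m) * α with hδ
    have hev_u : evMap α β u = δ := by
      rw [hu, map_mul, map_zpow, hof_t, hof_f]
    refine ⟨u * FreeGroup.of true * u⁻¹, ?_⟩
    have hev : evMap α β (u * FreeGroup.of true * u⁻¹) = δ * β * δ⁻¹ := by
      rw [map_mul, map_mul, map_inv, hev_u, hof_t]
    rw [hev, conj_pow]
    have hδinvx : δ⁻¹ x = c := by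
      have h1 : δ c = x := by
        rw [hδ, Equiv.Perm.mul_apply, fact2, hv₁, zpow_neg]
        exact (β ^ m).symm_apply_apply x
      rw [← h1]; exact δ.symm_apply_apply c
    have hδd : δ d = y := by
      rw [hδ, Equiv.Perm.mul_apply, fact3, hv₂, zpow_neg]
      exact (β ^ m).symm_apply_apply y
    show (δ * β ^ (k + 1) * δ⁻¹) x = y
    simp only [Equiv.Perm.mul_apply]
    rw [hδinvx, ← hK, ← hd, hδd]

lemma isOpen_D {X : Type} (β : Equiv.Perm X) (k : ℕ) (x y : X) :
    @IsOpen _ (symTop X) {α : Equiv.Perm X | ∃ w : FreeGroup Bool,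
      ((evMap α β w) ^ (k + 1)) x = y} := by
  have hset : {α : Equiv.Perm X | ∃ w : FreeGroup Bool, ((evMap α β w) ^ (k + 1)) x = y} =
      ⋃ w : FreeGroup Bool, {α : Equiv.Perm X | (evMap α β (w ^ (k + 1))) x = y} := by
    ext α
    simp only [Set.mem_iUnion, Set.mem_setOf_eq, map_pow]
  rw [hset]
  exact @isOpen_iUnion _ _ (symTop X) _ fun w => isOpen_word β (w ^ (k + 1)) x y

/-- Any element of a finite-index subgroup raised to `index !` lies in the subgroup. -/
lemma pow_index_factorial_mem {G : Type*} [Group G] (H : Subgroup G)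
    (hH : H.index ≠ 0) (g : G) : g ^ Nat.factorial H.index ∈ H :=
  Subgroup.pow_mem_of_index_ne_zero_of_dvd hH g fun m hm hle => Nat.dvd_factorial hm hle

/-- Proposition 3.4: for `β` simply transitive, the set `𝒰₄` of those `α` such that every
finite-index subgroup of `⟨α, β⟩ ≤ Sym(X)` acts transitively on `X` is comeagre in
`Sym(X)`. -/
theorem U4_generic {X : Type} [Countable X] [Infinite X]
    (β : Equiv.Perm X) (hβ : SimplyTransitive β) :
    {α : Equiv.Perm X |
      ∀ H : Subgroup (Subgroup.closure {α, β} : Subgroup (Equiv.Perm X)),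
        H.FiniteIndex → ∀ x y : X, ∃ h, h ∈ H ∧ ((h : Equiv.Perm X) x = y)}
      ∈ @residual (Equiv.Perm X) (symTop X) := by
  classical
  letI : TopologicalSpace (Equiv.Perm X) := symTop X
  set D : ℕ × X × X → Set (Equiv.Perm X) := fun p =>
    {α : Equiv.Perm X | ∃ w : FreeGroup Bool, ((evMap α β w) ^ (p.1 + 1)) p.2.1 = p.2.2}
    with hD
  have hDres : ∀ p, D p ∈ residual (Equiv.Perm X) := fun p =>
    residual_of_dense_open (isOpen_D β p.1 p.2.1 p.2.2) (dense_D β hβ p.1 p.2.1 p.2.2)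
  have hint : (⋂ p, D p) ∈ residual (Equiv.Perm X) := countable_iInter_mem.mpr hDres
  refine Filter.mem_of_superset hint ?_
  intro α hα
  simp only [Set.mem_iInter] at hα
  intro H hH x y
  have hidx : H.index ≠ 0 := hH.index_ne_zero
  obtain ⟨w, hw⟩ := hα (Nat.factorial H.index - 1, x, y)
  have hfact : Nat.factorial H.index - 1 + 1 = Nat.factorial H.index :=
    Nat.succ_pred_eq_of_pos (Nat.factorial_pos _)
  rw [hfact] at hw
  set g : Equiv.Perm X := evMap α β w with hg
  have hmem : g ∈ Subgroup.closure ({α, β} : Set (Equiv.Perm X)) := evMap_mem_closure α β w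
  refine ⟨(⟨g, hmem⟩ : (Subgroup.closure {α, β} : Subgroup (Equiv.Perm X))) ^ Nat.factorial H.index,
    pow_index_factorial_mem H hidx _, ?_⟩
  have hcoe : (((⟨g, hmem⟩ : (Subgroup.closure {α, β} : Subgroup (Equiv.Perm X))) ^ Nat.factorial H.index :
      (Subgroup.closure {α, β} : Subgroup (Equiv.Perm X))) : Equiv.Perm X) = g ^ Nat.factorial H.index := by
    push_cast
    rfl
  rw [hcoe]
  exact hw
end

section
/- Let F₂ be the free group on generators a, b. Let γ ∈ F₂ with γ ≠ 1 be such that its reduced word neither begins nor ends with a letter b^{±1} (in particular γ ∉ ⟨b⟩), and let l and k be nonzero integers of the same sign. Then γbˡ is not conjugate in F₂ to γb^{−k}, and γbˡ is not conjugate in F₂ to γ⁻¹bᵏ. In particular, for every w ∈ F₂, w⁻¹(γbˡ)w is equal to neither γb^{−k} nor γ⁻¹bᵏ. -/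
open FreeGroup List

abbrev Ltr := Bool × Bool

def linv (p : Ltr) : Ltr := (p.1, !p.2)

lemma linv_linv (p : Ltr) : linv (linv p) = p := by simp [linv]

lemma linv_ne (p : Ltr) : linv p ≠ p := by
  simp [linv, Prod.ext_iff]

def IsRed (L : List Ltr) : Prop :=
  List.Chain' (fun a b => ¬(a.1 = b.1 ∧ a.2 = !b.2)) L

lemma reduce_eq_self {L : List Ltr} (h : IsRed L) : FreeGroup.reduce L = L := by
  induction L with
  | nil => rfl
  | cons x t ih =>
    have ht : IsRed t := h.tail
    rw [reduce.cons, ih ht]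
    cases t with
    | nil => rfl
    | cons y s =>
      have : ¬(x.1 = y.1 ∧ x.2 = !y.2) := List.isChain_cons_cons.1 h |>.1
      simp [this]

lemma isRed_reduce (L : List Ltr) : IsRed (FreeGroup.reduce L) := by
  induction L with
  | nil => exact List.isChain_nil
  | cons x t ih =>
    rw [reduce.cons]
    cases hr : FreeGroup.reduce t with
    | nil => exact List.isChain_singleton x
    | cons y s =>
      rw [hr] at ih
      by_cases hxy : x.1 = y.1 ∧ x.2 = !y.2
      · simp only [hxy, if_true]
        exact ih.tail
      · simp only [hxy, if_false]
        exact List.isChain_cons_cons.2 ⟨hxy, ih⟩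

lemma isRed_toWord (x : FreeGroup Bool) : IsRed x.toWord := by
  have := isRed_reduce x.toWord
  rwa [reduce_toWord] at this

lemma toWord_mk_of_isRed {L : List Ltr} (h : IsRed L) : (FreeGroup.mk L).toWord = L := by
  rw [toWord_mk, reduce_eq_self h]

lemma isRed_invRev {L : List Ltr} (h : IsRed L) : IsRed (invRev L) := by
  have : FreeGroup.reduce (invRev L) = invRev L := by
    rw [reduce_invRev, reduce_eq_self h]
  have h2 := isRed_reduce (invRev L)
  rwa [this] at h2

lemma invRev_replicate (n : ℕ) (p : Ltr) :
    invRev (List.replicate n p) = List.replicate n (linv p) := by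
  simp [invRev, linv, List.map_replicate, List.reverse_replicate]

lemma head?_invRev (L : List Ltr) : (invRev L).head? = L.getLast?.map linv := by
  simp only [invRev, List.head?_reverse, List.getLast?_map]
  rfl

lemma getLast?_invRev (L : List Ltr) : (invRev L).getLast? = L.head?.map linv := by
  simp only [invRev, List.getLast?_reverse, List.head?_map]
  rfl

lemma isRed_replicate (n : ℕ) (p : Ltr) : IsRed (List.replicate n p) := by
  have := isRed_reduce (List.replicate n p)
  rwa [reduce_replicate] at this

lemma zpow_of_toWord (l : ℤ) :
    ((FreeGroup.of true : FreeGroup Bool) ^ l).toWord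
      = List.replicate l.natAbs (true, decide (0 < l)) := by
  rcases lt_trichotomy l 0 with h | h | h
  · have he : l = -(l.natAbs : ℤ) := by omega
    rw [he, zpow_neg, zpow_natCast, toWord_inv, toWord_of_pow, invRev_replicate]
    have h1 : decide (0 < -((l.natAbs : ℤ))) = false := by simp
    rw [h1]
    have h2 : (-(l.natAbs:ℤ)).natAbs = l.natAbs := by omega
    rw [h2]
    rfl
  · subst h; simp
  · have : l = (l.natAbs : ℤ) := by omega
    rw [this, zpow_natCast, toWord_of_pow]
    congr 1
    simp
    omega

lemma nin_symm {p q : Ltr} (h : ¬(p.1 = q.1 ∧ p.2 = !q.2)) : ¬(q.1 = p.1 ∧ q.2 = !p.2) := by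
  rintro ⟨h1, h2⟩
  exact h ⟨h1.symm, by rw [h2]; simp⟩

lemma ne_linv_rel {p x : Ltr} (h : p ≠ linv x) : ¬(p.1 = x.1 ∧ p.2 = !x.2) := by
  rintro ⟨h1, h2⟩
  exact h (Prod.ext h1 h2)

lemma linv_rel_self (q : Ltr) : (linv q).1 = q.1 ∧ (linv q).2 = !q.2 := ⟨rfl, rfl⟩

/-- cyclically reduced word predicate -/
def CRw (L : List Ltr) : Prop :=
  ∀ p q, L.head? = some p → L.getLast? = some q → ¬(p.1 = q.1 ∧ p.2 = !q.2)

lemma crw_singleton (x : Ltr) : CRw [x] := by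
  intro p q hp hq
  simp at hp hq
  subst hp hq
  simp

theorem conj_rot : ∀ (n : ℕ) (w u v : FreeGroup Bool), w.toWord.length ≤ n →
    CRw u.toWord → CRw v.toWord → w⁻¹ * u * w = v → u.toWord.IsRotated v.toWord := by
  intro n
  induction n with
  | zero =>
    intro w u v hlen _ _ hconj
    have hw : w = 1 := by
      rw [← toWord_eq_nil_iff]
      exact List.eq_nil_of_length_eq_zero (Nat.le_zero.1 hlen)
    subst hw
    simp only [inv_one, one_mul, mul_one] at hconj
    subst hconj
    exact List.IsRotated.refl _
  | succ n ih =>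
    intro w u v hlen hcru hcrv hconj
    cases hW : w.toWord with
    | nil =>
      have hw : w = 1 := toWord_eq_nil_iff.1 hW
      subst hw
      simp only [inv_one, one_mul, mul_one] at hconj
      subst hconj
      exact List.IsRotated.refl _
    | cons x t =>
      have hredW : IsRed (x :: t) := hW ▸ isRed_toWord w
      have hredt : IsRed t := hredW.tail
      have hwe : w = FreeGroup.mk [x] * FreeGroup.mk t := by
        rw [mul_mk]
        show w = FreeGroup.mk (x :: t)
        rw [← hW, mk_toWord]
      have htw : (FreeGroup.mk t).toWord = t := toWord_mk_of_isRed hredt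
      have hlent : (FreeGroup.mk t).toWord.length ≤ n := by
        rw [htw]
        have : (x :: t).length ≤ n + 1 := hW ▸ hlen
        simpa using this
      cases hU : u.toWord with
      | nil =>
        have hu : u = 1 := toWord_eq_nil_iff.1 hU
        subst hu
        simp only [mul_one] at hconj
        have hv : v = 1 := by rw [← hconj]; group
        rw [hv, toWord_one]
      | cons y s =>
        have hredU : IsRed (y :: s) := hU ▸ isRed_toWord u
        have hue : u = FreeGroup.mk ((y :: s) : List Ltr) := by rw [← hU, mk_toWord]
        by_cases hyx : y = x
        · -- head cancellation
          set u' : FreeGroup Bool := FreeGroup.mk (s ++ [y]) with hu'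
          have hred' : IsRed (s ++ [y]) := by
            apply (List.isChain_append).2
            refine ⟨hredU.tail, List.isChain_singleton y, ?_⟩
            intro p hp q hq
            simp only [List.head?_cons, Option.mem_def, Option.some.injEq] at hq
            subst hq
            apply nin_symm
            apply hcru y p
            · rw [hU]; rfl
            · rw [hU]
              rcases hs : s with _ | ⟨y2, s2⟩
              · rw [hs] at hp; simp at hp
              · rw [List.getLast?_cons_cons]
                rw [hs] at hp
                exact hp
          have hu'w : u'.toWord = s ++ [y] := toWord_mk_of_isRed hred'
          have hcru' : CRw u'.toWord := by
            rw [hu'w]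
            rcases hs : s with _ | ⟨y2, s2⟩
            · simpa using crw_singleton y
            · intro p q hp hq
              have hq' : q = y := by
                rw [List.getLast?_append_of_ne_nil _ (by simp)] at hq
                simp at hq
                exact hq.symm
              subst hq'
              have hp' : p = y2 := by
                simp at hp
                exact hp.symm
              subst hp'
              apply nin_symm
              exact (List.isChain_cons_cons.1 (hs ▸ hredU)).1
          have h1 : (FreeGroup.mk ([x] : List Ltr))⁻¹ * u * FreeGroup.mk [x] = u' := by
            rw [hue, hyx, hu', hyx]
            rw [show ((x :: s : List Ltr)) = [x] ++ s from rfl, ← mul_mk, ← mul_mk]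
            group
          have heq : (FreeGroup.mk t)⁻¹ * u' * (FreeGroup.mk t) = v := by
            rw [← h1, ← hconj, hwe]
            group
          have hrot1 : (y :: s).IsRotated u'.toWord := by
            rw [hu'w, show ((y :: s : List Ltr)) = [y] ++ s from rfl]
            exact List.isRotated_append
          exact hrot1.trans (ih (FreeGroup.mk t) u' v hlent hcru' hcrv heq)
        · by_cases hz : (y :: s : List Ltr).getLast? = some (linv x)
          · -- tail cancellation
            set s' := (y :: s : List Ltr).dropLast with hs'def
            have hsplit : (y :: s : List Ltr) = s' ++ [linv x] :=
              (List.dropLast_append_getLast? _ hz).symm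
            have hinvx : (FreeGroup.mk ([x] : List Ltr))⁻¹ = FreeGroup.mk [linv x] := by
              rw [inv_mk]; rfl
            have hredfull : IsRed (s' ++ [linv x]) := hsplit ▸ hredU
            have hreds' : IsRed s' := (List.isChain_append.1 hredfull).1
            have hred' : IsRed (linv x :: s') := by
              rcases hs : s' with _ | ⟨y2, s2⟩
              · exact List.isChain_singleton _
              · apply List.isChain_cons_cons.2
                constructor
                · rintro ⟨h1, h2⟩
                  apply hyx
                  have hy2' : y2 = y := by
                    rw [hs, List.cons_append] at hsplit
                    exact (List.cons_eq_cons.mp hsplit).1.symm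
                  subst hy2'
                  apply Prod.ext
                  · exact h1.symm
                  · simp only [linv] at h2
                    exact (Bool.not_inj h2).symm
                · rw [← hs]; exact hreds'
            have hu'w : (FreeGroup.mk (linv x :: s')).toWord = linv x :: s' :=
              toWord_mk_of_isRed hred'
            have hcru' : CRw (FreeGroup.mk (linv x :: s')).toWord := by
              rw [hu'w]
              rcases hs : s' with _ | ⟨y2, s2⟩
              · simpa using crw_singleton (linv x)
              · intro p q hp hq
                have hp' : p = linv x := by simp at hp; exact hp.symm
                subst hp'
                apply nin_symm
                have hjunc := (List.isChain_append.1 hredfull).2.2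
                refine hjunc q ?_ (linv x) (by simp)
                rw [List.getLast?_cons_cons] at hq
                rw [hs, Option.mem_def]
                exact hq
            have h1 : (FreeGroup.mk ([x] : List Ltr))⁻¹ * u * FreeGroup.mk [x] =
                FreeGroup.mk (linv x :: s') := by
              rw [hue, hsplit]
              rw [show (s' ++ [linv x] : List Ltr) = s' ++ [linv x] from rfl, ← mul_mk]
              rw [show ((linv x :: s' : List Ltr)) = [linv x] ++ s' from rfl, ← mul_mk]
              rw [hinvx]
              have hxx : FreeGroup.mk ([linv x] : List Ltr) = (FreeGroup.mk [x])⁻¹ := hinvx.symm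
              rw [hxx]
              group
            have heq : (FreeGroup.mk t)⁻¹ * FreeGroup.mk (linv x :: s') * (FreeGroup.mk t) = v := by
              rw [← h1, ← hconj, hwe]
              group
            have hrot1 : (y :: s).IsRotated (FreeGroup.mk (linv x :: s')).toWord := by
              rw [hu'w, hsplit, show ((linv x :: s' : List Ltr)) = [linv x] ++ s' from rfl]
              exact List.isRotated_append
            exact hrot1.trans (ih (FreeGroup.mk t) _ v hlent hcru' hcrv heq)
          · -- no cancellation: contradiction with CRw v
            exfalso
            set V : List Ltr := invRev (x :: t) ++ ((y :: s) ++ (x :: t)) with hV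
            have hinvne : invRev (x :: t) ≠ [] := by
              intro h
              have := congrArg List.length h
              simp [invRev_length] at this
            have hjunc1 : ∀ p ∈ (invRev (x :: t)).getLast?, ∀ q ∈ ((y :: s) ++ (x :: t) : List Ltr).head?,
                ¬(p.1 = q.1 ∧ p.2 = !q.2) := by
              intro p hp q hq
              simp only [Option.mem_def] at hp hq
              rw [getLast?_invRev] at hp
              simp only [List.head?_cons, Option.map_eq_some_iff, Option.some.injEq] at hp
              rcases hp with ⟨p0, hp0, hp1⟩
              have hq' : q = y := by
                rw [List.cons_append, List.head?_cons] at hq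
                injection hq with hq
                exact hq.symm
              subst hq'
              subst hp1
              rw [← hp0]
              rintro ⟨h1, h2⟩
              apply hyx
              apply Prod.ext
              · exact h1.symm
              · simp only [linv] at h2
                exact (Bool.not_inj h2).symm
            have hjunc2 : ∀ p ∈ (y :: s : List Ltr).getLast?, ∀ q ∈ (x :: t : List Ltr).head?,
                ¬(p.1 = q.1 ∧ p.2 = !q.2) := by
              intro p hp q hq
              simp only [Option.mem_def, List.head?_cons] at hp hq
              injection hq with hq
              subst hq
              apply ne_linv_rel
              intro hpl
              exact hz (hpl ▸ hp)
            have hredV : IsRed V := by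
              apply List.isChain_append.2
              refine ⟨isRed_invRev hredW, ?_, hjunc1⟩
              exact List.isChain_append.2 ⟨hredU, hredW, hjunc2⟩
            have hvV : v = FreeGroup.mk V := by
              rw [← hconj, hwe, hue]
              rw [hV, ← mul_mk, ← mul_mk]
              rw [← inv_mk]
              have : FreeGroup.mk ([x] : List Ltr) * FreeGroup.mk t = FreeGroup.mk (x :: t) := by
                rw [mul_mk]; rfl
              rw [← this]
              group
            have hvw : v.toWord = V := by rw [hvV, toWord_mk_of_isRed hredV]
            -- head and last of V
            have hlast : V.getLast? = (x :: t : List Ltr).getLast? := by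
              rw [hV, List.getLast?_append_of_ne_nil _ (List.append_ne_nil_of_right_ne_nil _ (List.cons_ne_nil _ _)),
                List.getLast?_append_of_ne_nil _ (List.cons_ne_nil _ _)]
            set q0 := (x :: t : List Ltr).getLast (by simp) with hq0
            have hlast' : V.getLast? = some q0 := by
              rw [hlast]; exact List.getLast?_eq_getLast _
            have hhead' : V.head? = some (linv q0) := by
              rw [hV, List.head?_append_of_ne_nil _ hinvne, head?_invRev,
                List.getLast?_eq_getLast (l := (x :: t : List Ltr)) (by simp)]
              rfl
            have := hcrv (linv q0) q0 (hvw ▸ hhead') (hvw ▸ hlast')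
            exact this (linv_rel_self q0)

lemma getD_rotate (L : List Ltr) (n i : ℕ) (h : i < L.length) :
    (L.rotate n).getD i default = L.getD ((i + n) % L.length) default := by
  have h1 : i < (L.rotate n).length := by simpa using h
  have h2 : (i + n) % L.length < L.length := Nat.mod_lt _ (by omega)
  rw [List.getD_eq_getElem _ _ h1, List.getD_eq_getElem _ _ h2]
  exact List.getElem_rotate L n i h1

lemma getD_append_left' (g t : List Ltr) (i : ℕ) (h : i < g.length) :
    (g ++ t).getD i default = g.getD i default := by
  rw [List.getD_eq_getElem _ _ (by simp; omega), List.getD_eq_getElem _ _ h]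
  exact List.getElem_append_left h

lemma getD_append_right' (g t : List Ltr) (i : ℕ) (h : g.length ≤ i)
    (h2 : i < g.length + t.length) :
    (g ++ t).getD i default = t.getD (i - g.length) default := by
  rw [List.getD_eq_getElem _ _ (by simp; omega), List.getD_eq_getElem _ _ (by omega)]
  exact List.getElem_append_right h

lemma getD_replicate' (n i : ℕ) (ξ : Ltr) (h : i < n) :
    (List.replicate n ξ).getD i default = ξ := by
  rw [List.getD_eq_getElem _ _ (by simpa using h)]
  exact List.getElem_replicate ..

lemma getD_invRev (g : List Ltr) (i : ℕ) (h : i < g.length) :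
    (invRev g).getD i default = linv (g.getD (g.length - 1 - i) default) := by
  have e : invRev g = (List.map (fun p : Ltr => (p.1, !p.2)) g).reverse := rfl
  rw [e]
  have h1 : i < ((List.map (fun p : Ltr => (p.1, !p.2)) g).reverse).length := by
    simpa using h
  rw [List.getD_eq_getElem _ _ h1, List.getD_eq_getElem _ _ (by omega)]
  rw [List.getElem_reverse, List.getElem_map]
  simp only [List.length_map]
  rfl

lemma no_rot (g : List Ltr) (hred : IsRed g) (hne : g ≠ []) (ξ : Ltr) (l : ℕ) (hl : 0 < l) :
    ¬ (g ++ List.replicate l ξ).IsRotated (invRev g ++ List.replicate l ξ) := by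
  intro hrot
  obtain ⟨r, hr⟩ := hrot
  set m := g.length with hm
  have hm1 : 1 ≤ m := by
    rw [hm]; exact List.length_pos_iff.2 hne
  set N := m + l with hN
  haveI : NeZero N := ⟨by omega⟩
  set L := g ++ List.replicate l ξ with hL
  set M := invRev g ++ List.replicate l ξ with hM
  have hLlen : L.length = N := by simp [hL, hN, hm]
  have hMlen : M.length = N := by simp [hM, hN, hm, invRev_length]
  set f : ZMod N → Ltr := fun j => L.getD j.val default with hf
  set fM : ZMod N → Ltr := fun j => M.getD j.val default with hfM
  have F1 : ∀ j : ZMod N, fM j = f (j + (r : ZMod N)) := by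
    intro j
    have hj : j.val < N := ZMod.val_lt j
    have hval : (j + (r : ZMod N)).val = (j.val + r) % N := by
      rw [ZMod.val_add, ZMod.val_natCast, Nat.add_mod_mod]
    rw [hfM, hf]
    simp only []
    rw [← hr, getD_rotate _ _ _ (by rw [hLlen]; exact hj), hLlen, hval]
  have F2 : ∀ j : ZMod N, m ≤ j.val → f j = ξ := by
    intro j hj
    have hjN : j.val < N := ZMod.val_lt j
    rw [hf]; simp only []
    rw [hL, getD_append_right' _ _ _ (by rw [← hm]; omega)
      (by rw [List.length_replicate, ← hm]; omega)]
    exact getD_replicate' _ _ _ (by rw [← hm]; omega)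
  have F3 : ∀ i : ℕ, i < m → f (i : ZMod N) = g.getD i default := by
    intro i hi
    have hiN : i < N := by omega
    rw [hf]; simp only []
    rw [ZMod.val_natCast_of_lt hiN, hL, getD_append_left' _ _ _ (by rw [← hm]; omega)]
  have F4 : ∀ j : ZMod N, m ≤ j.val → fM j = ξ := by
    intro j hj
    have hjN : j.val < N := ZMod.val_lt j
    rw [hfM]; simp only []
    rw [hM, getD_append_right' _ _ _ (by rw [invRev_length, ← hm]; omega)
      (by rw [invRev_length, List.length_replicate, ← hm]; omega)]
    exact getD_replicate' _ _ _ (by rw [invRev_length, ← hm]; omega)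
  have F5 : ∀ i : ℕ, i < m → fM (i : ZMod N) = linv (g.getD (m - 1 - i) default) := by
    intro i hi
    have hiN : i < N := by omega
    rw [hfM]; simp only []
    rw [ZMod.val_natCast_of_lt hiN, hM,
      getD_append_left' _ _ _ (by rw [invRev_length, ← hm]; omega),
      getD_invRev _ _ (by rw [← hm]; omega), ← hm]
  set d : ZMod N := ((m - 1 : ℕ) : ZMod N) - (r : ZMod N) with hd
  have H : ∀ i : ℕ, i < m → fM (i : ZMod N) = linv (fM (d - (i : ZMod N))) := by
    intro i hi
    have h2 : g.getD (m - 1 - i) default = f ((m - 1 - i : ℕ) : ZMod N) :=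
      (F3 _ (by omega)).symm
    have h3 : f ((m - 1 - i : ℕ) : ZMod N)
        = fM (((m - 1 - i : ℕ) : ZMod N) - (r : ZMod N)) := by
      rw [F1]; ring_nf
    have h4 : (((m - 1 - i : ℕ) : ZMod N)) = ((m - 1 : ℕ) : ZMod N) - (i : ZMod N) := by
      have h0 : (m - 1 - i) + i = m - 1 := by omega
      have h0' := congrArg (fun t : ℕ => (t : ZMod N)) h0
      push_cast at h0'
      linear_combination h0'
    rw [F5 i hi, h2, h3, h4]
    congr 2
    rw [hd]; ring
  have H2 : ∀ i : ℕ, m ≤ i → i < N → fM (d - (i : ZMod N)) = ξ := by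
    intro i him hiN
    have h1 : fM (d - (i : ZMod N)) = f (((m - 1 : ℕ) : ZMod N) - (i : ZMod N)) := by
      rw [F1]
      congr 1
      rw [hd]; ring
    have h4 : ((m - 1 : ℕ) : ZMod N) - (i : ZMod N) = ((m - 1 + N - i : ℕ) : ZMod N) := by
      have h0 : (m - 1 + N - i) + i = m - 1 + N := by omega
      have h0' := congrArg (fun t : ℕ => (t : ZMod N)) h0
      push_cast at h0'
      rw [ZMod.natCast_self] at h0'
      linear_combination -h0'
    have h5 : (((m - 1 + N - i : ℕ) : ZMod N)).val = m - 1 + N - i :=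
      ZMod.val_natCast_of_lt (by omega)
    rw [h1, h4, F2 _ (by rw [h5]; omega)]
  by_cases hA : ∃ i : ℕ, i < m ∧ m ≤ (d - (i : ZMod N)).val
  · obtain ⟨i, him, hge⟩ := hA
    have e1 : fM (i : ZMod N) = linv ξ := by rw [H i him, F4 _ hge]
    have e2 : fM (i : ZMod N) = ξ := by
      have h6 := H2 (d - (i : ZMod N)).val hge (ZMod.val_lt _)
      rw [ZMod.natCast_rightInverse (d - (i : ZMod N))] at h6
      have h7 : d - (d - (i : ZMod N)) = (i : ZMod N) := by ring
      rw [h7] at h6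
      exact h6
    rw [e1] at e2
    exact linv_ne ξ e2
  · push_neg at hA
    have hd0 : d.val < m := by
      have := hA 0 (by omega)
      simpa using this
    have hdm : d.val = m - 1 := by
      by_contra hcon
      have hlt : d.val + 1 < m := by omega
      have h7 := hA (d.val + 1) hlt
      have h8 : d - ((d.val + 1 : ℕ) : ZMod N) = -1 := by
        push_cast
        rw [ZMod.natCast_rightInverse d]
        ring
      have h9 : (-1 : ZMod N) = ((N - 1 : ℕ) : ZMod N) := by
        have h0 : ((N - 1 : ℕ) : ZMod N) + 1 = ((N - 1 + 1 : ℕ) : ZMod N) := by push_cast; ring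
        have h0' : N - 1 + 1 = N := by omega
        rw [h0', ZMod.natCast_self] at h0
        linear_combination -h0
      rw [h8, h9, ZMod.val_natCast_of_lt (by omega)] at h7
      omega
    have hdd : d = ((m - 1 : ℕ) : ZMod N) := by
      conv_lhs => rw [← ZMod.natCast_rightInverse d]
      rw [hdm]
    have key : ∀ i : ℕ, i < m → g.getD i default = linv (g.getD (m - 1 - i) default) := by
      intro i hi
      have h1 := H i hi
      have h4 : d - (i : ZMod N) = ((m - 1 - i : ℕ) : ZMod N) := by
        rw [hdd]
        have h0 : (m - 1 - i) + i = m - 1 := by omega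
        have h0' := congrArg (fun t : ℕ => (t : ZMod N)) h0
        push_cast at h0'
        linear_combination -h0'
      rw [F5 i hi, h4, F5 (m - 1 - i) (by omega)] at h1
      have h5 : m - 1 - (m - 1 - i) = i := by omega
      rw [h5, linv_linv] at h1
      exact h1.symm
    rcases Nat.even_or_odd m with he | ho
    · obtain ⟨c, hc⟩ := he
      have hc1 : 1 ≤ c := by omega
      have hkey := key c (by omega)
      have h5 : m - 1 - c = c - 1 := by omega
      rw [h5] at hkey
      have hlen1 : c - 1 < g.length := by rw [← hm]; omega
      have hlen2 : c - 1 + 1 < g.length := by rw [← hm]; omega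
      have hchain := List.isChain_iff_getElem.1 hred (c - 1) (by omega)
      apply hchain
      have ea : g.get ⟨c - 1, by omega⟩ = g.getD (c - 1) default :=
        (List.getD_eq_getElem _ _ hlen1).symm
      have eb : g.get ⟨c - 1 + 1, by omega⟩ = g.getD c default := by
        rw [List.get_eq_getElem, ← List.getD_eq_getElem _ default hlen2]
        congr 1
        omega
      rw [show g[c - 1] = g.get ⟨c - 1, hlen1⟩ from rfl,
        show g[c - 1 + 1] = g.get ⟨c - 1 + 1, hlen2⟩ from rfl, ea, eb, hkey]
      exact ⟨rfl, by simp [linv]⟩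
    · obtain ⟨c, hc⟩ := ho
      have hkey := key c (by omega)
      have h5 : m - 1 - c = c := by omega
      rw [h5] at hkey
      exact linv_ne _ hkey.symm

lemma toWord_mul_bpow (γ : FreeGroup Bool)
    (hlast : ∀ x ∈ γ.toWord.getLast?, x.1 = false) (l : ℤ) (hl : l ≠ 0) :
    (γ * (FreeGroup.of true) ^ l).toWord
      = γ.toWord ++ List.replicate l.natAbs (true, decide (0 < l)) := by
  have hnat : 0 < l.natAbs := Int.natAbs_pos.2 hl
  have h1 : (FreeGroup.of true : FreeGroup Bool) ^ l
      = FreeGroup.mk (List.replicate l.natAbs (true, decide (0 < l))) := by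
    rw [← zpow_of_toWord l, mk_toWord]
  have h2 : γ * (FreeGroup.of true) ^ l
      = FreeGroup.mk (γ.toWord ++ List.replicate l.natAbs (true, decide (0 < l))) := by
    conv_lhs => rw [← mk_toWord (x := γ), h1]
    rw [mul_mk]
  rw [h2]
  apply toWord_mk_of_isRed
  apply List.isChain_append.2
  refine ⟨isRed_toWord γ, isRed_replicate _ _, ?_⟩
  intro p hp q hq
  have hp1 : p.1 = false := hlast p hp
  have hq1 : q = (true, decide (0 < l)) := by
    rcases hn : l.natAbs with _ | n
    · omega
    · rw [hn, List.replicate_succ, List.head?_cons, Option.mem_def] at hq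
      injection hq with hq
      exact hq.symm
  rintro ⟨hcon, -⟩
  rw [hp1, hq1] at hcon
  simp at hcon

lemma crw_mul_bpow (γ : FreeGroup Bool) (hγ : γ ≠ 1)
    (hhead : ∀ x ∈ γ.toWord.head?, x.1 = false)
    (hlast : ∀ x ∈ γ.toWord.getLast?, x.1 = false) (l : ℤ) (hl : l ≠ 0) :
    CRw ((γ * (FreeGroup.of true) ^ l).toWord) := by
  rw [toWord_mul_bpow γ hlast l hl]
  have hnat : 0 < l.natAbs := Int.natAbs_pos.2 hl
  have hgne : γ.toWord ≠ [] := fun h => hγ (toWord_eq_nil_iff.1 h)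
  intro p q hp hq
  have hp1 : p.1 = false := by
    apply hhead
    rw [List.head?_append_of_ne_nil _ hgne] at hp
    exact hp
  have hq1 : q.1 = true := by
    rw [List.getLast?_append_of_ne_nil _ (by
      intro h
      have := congrArg List.length h
      simp at this
      omega)] at hq
    have : q ∈ (List.replicate l.natAbs ((true, decide (0 < l)) : Ltr)).getLast? :=
      Option.mem_def.2 hq
    have hmem := List.mem_of_mem_getLast? this
    rw [List.eq_of_mem_replicate hmem]
  rintro ⟨hcon, -⟩
  rw [hp1, hq1] at hcon
  exact Bool.false_ne_true hcon


/-- Lemma 3.9: let `γ ≠ 1` in `F₂ = FreeGroup Bool` (generators `a = FreeGroup.of false`,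
`b = FreeGroup.of true`) be such that its reduced word neither begins nor ends with a letter
`b^{±1}`, and let `l, k` be nonzero integers of the same sign. Then `γbˡ` is conjugate
neither to `γb⁻ᵏ` nor to `γ⁻¹bᵏ`; in particular no conjugate `w⁻¹(γbˡ)w` equals either. -/
theorem not_conj_gamma_b_pow (γ : FreeGroup Bool) (hγ : γ ≠ 1)
    (hhead : ∀ x ∈ γ.toWord.head?, x.1 = false)
    (hlast : ∀ x ∈ γ.toWord.getLast?, x.1 = false)
    (l k : ℤ) (hsign : (0 < l ∧ 0 < k) ∨ (l < 0 ∧ k < 0)) :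
    ¬ IsConj (γ * (FreeGroup.of true) ^ l) (γ * (FreeGroup.of true) ^ (-k)) ∧
    ¬ IsConj (γ * (FreeGroup.of true) ^ l) (γ⁻¹ * (FreeGroup.of true) ^ k) ∧
    ∀ w : FreeGroup Bool,
      w⁻¹ * (γ * (FreeGroup.of true) ^ l) * w ≠ γ * (FreeGroup.of true) ^ (-k) ∧
      w⁻¹ * (γ * (FreeGroup.of true) ^ l) * w ≠ γ⁻¹ * (FreeGroup.of true) ^ k := by
  have hl0 : l ≠ 0 := by rcases hsign with ⟨h1, _⟩ | ⟨h1, _⟩ <;> omega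
  have hk0 : k ≠ 0 := by rcases hsign with ⟨_, h2⟩ | ⟨_, h2⟩ <;> omega
  -- Claim 1 : abelianization
  have claim1 : ¬ IsConj (γ * (FreeGroup.of true) ^ l) (γ * (FreeGroup.of true) ^ (-k)) := by
    intro hconj
    set φ : FreeGroup Bool →* Multiplicative ℤ :=
      FreeGroup.lift (fun x => if x then Multiplicative.ofAdd (1 : ℤ) else 1) with hφ
    have h1 := φ.map_isConj hconj
    rw [isConj_iff_eq] at h1
    rw [MonoidHom.map_mul φ, MonoidHom.map_mul φ, MonoidHom.map_zpow φ, MonoidHom.map_zpow φ] at h1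
    have h2 : φ (FreeGroup.of true) = Multiplicative.ofAdd (1 : ℤ) := by
      rw [hφ, FreeGroup.lift_apply_of]
      simp
    rw [h2] at h1
    have h3 : (Multiplicative.ofAdd (1 : ℤ)) ^ l = (Multiplicative.ofAdd (1 : ℤ)) ^ (-k) :=
      mul_left_cancel h1
    have h4 := congrArg Multiplicative.toAdd h3
    simp only [toAdd_zpow, toAdd_ofAdd, smul_eq_mul, mul_one] at h4
    omega
  -- Claim 2 : via rotation theorem and the anti-palindrome argument
  have claim2 : ¬ IsConj (γ * (FreeGroup.of true) ^ l) (γ⁻¹ * (FreeGroup.of true) ^ k) := by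
    intro hconj
    have hgne : γ.toWord ≠ [] := fun h => hγ (toWord_eq_nil_iff.1 h)
    have hinvlast : ∀ x ∈ (γ⁻¹).toWord.getLast?, x.1 = false := by
      intro x hx
      rw [toWord_inv, getLast?_invRev, Option.mem_def, Option.map_eq_some_iff] at hx
      rcases hx with ⟨p, hp, hpl⟩
      have := hhead p (Option.mem_def.2 hp)
      rw [← hpl, linv]
      exact this
    have hinvhead : ∀ x ∈ (γ⁻¹).toWord.head?, x.1 = false := by
      intro x hx
      rw [toWord_inv, head?_invRev, Option.mem_def, Option.map_eq_some_iff] at hx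
      rcases hx with ⟨p, hp, hpl⟩
      have := hlast p (Option.mem_def.2 hp)
      rw [← hpl, linv]
      exact this
    obtain ⟨c, hc⟩ := isConj_iff.1 hconj
    have hw : (c⁻¹)⁻¹ * (γ * (FreeGroup.of true) ^ l) * c⁻¹
        = γ⁻¹ * (FreeGroup.of true) ^ k := by
      rw [inv_inv]; exact hc
    have hrot := conj_rot ((c⁻¹ : FreeGroup Bool).toWord.length) c⁻¹ _ _ le_rfl
      (crw_mul_bpow γ hγ hhead hlast l hl0)
      (crw_mul_bpow γ⁻¹ (by simp [hγ]) hinvhead hinvlast k hk0) hw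
    rw [toWord_mul_bpow γ hlast l hl0, toWord_mul_bpow γ⁻¹ hinvlast k hk0,
      toWord_inv] at hrot
    have hsigneq : (decide (0 < l)) = (decide (0 < k)) := by
      rcases hsign with ⟨h1, h2⟩ | ⟨h1, h2⟩ <;> simp <;> omega
    have hlen := hrot.perm.length_eq
    rw [List.length_append, List.length_append, List.length_replicate,
      List.length_replicate, invRev_length] at hlen
    have hnn : l.natAbs = k.natAbs := by omega
    rw [← hsigneq, ← hnn] at hrot
    exact no_rot γ.toWord (isRed_toWord γ) hgne _ _ (Int.natAbs_pos.2 hl0) hrot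
  refine ⟨claim1, claim2, ?_⟩
  intro w
  constructor
  · intro h
    exact claim1 (isConj_iff.2 ⟨w⁻¹, by rw [inv_inv]; exact h⟩)
  · intro h
    exact claim2 (isConj_iff.2 ⟨w⁻¹, by rw [inv_inv]; exact h⟩)
end

section
/- Let β ∈ Sym(X) be simply transitive. Then for all nonzero integers n, m, every α' ∈ Sym(X) and every finite subset F ⊆ X, there exists α ∈ Sym(X) with α(x) = α'(x) for all x ∈ F such that the subgroup of Sym(X) generated by αⁿ and βᵐ acts transitively on X. Consequently, for each nonzero n, m the set of α ∈ Sym(X) for which ⟨αⁿ, βᵐ⟩ does not act transitively on X has empty interior. -/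
open Set in
lemma extendPairs {X : Type} [Countable X] [Infinite X] {ι : Type}
    (s : Set ι) (hs : s.Finite) (f g : ι → X)
    (hf : Set.InjOn f s) (hg : Set.InjOn g s) :
    ∃ σ : Equiv.Perm X, ∀ i ∈ s, σ (f i) = g i := by
  classical
  set A := f '' s with hA
  set Bs := g '' s with hBs
  have hAfin : A.Finite := hs.image f
  have hBfin : Bs.Finite := hs.image g
  haveI : Infinite (↥(Aᶜ)) := Set.infinite_coe_iff.mpr hAfin.infinite_compl
  haveI : Infinite (↥(Bsᶜ)) := Set.infinite_coe_iff.mpr hBfin.infinite_compl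
  have e₂ : ↥(Aᶜ) ≃ ↥(Bsᶜ) := Classical.choice (Cardinal.eq.mp (by
    rw [Cardinal.mk_eq_aleph0 (↥(Aᶜ)), Cardinal.mk_eq_aleph0]))
  have key : ∀ (i : ι) (hi : i ∈ s),
      ((Equiv.Set.imageOfInjOn f s hf).symm.trans (Equiv.Set.imageOfInjOn g s hg))
        ⟨f i, mem_image_of_mem f hi⟩ = ⟨g i, mem_image_of_mem g hi⟩ := by
    intro i hi
    rw [Equiv.trans_apply]
    set a := (Equiv.Set.imageOfInjOn f s hf).symm ⟨f i, mem_image_of_mem f hi⟩ with ha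
    have h3 : (Equiv.Set.imageOfInjOn f s hf) a = ⟨f i, mem_image_of_mem f hi⟩ := by
      rw [ha, Equiv.apply_symm_apply]
    have h4 : f (a : ι) = f i := congrArg Subtype.val h3
    have h5 : (a : ι) = i := hf a.2 hi h4
    ext
    show g (a : ι) = g i
    rw [h5]
  set e₁ : ↥A ≃ ↥Bs :=
    (Equiv.Set.imageOfInjOn f s hf).symm.trans (Equiv.Set.imageOfInjOn g s hg) with he₁
  refine ⟨(Equiv.Set.sumCompl A).symm.trans ((e₁.sumCongr e₂).trans (Equiv.Set.sumCompl Bs)),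
    fun i hi => ?_⟩
  have hfi : f i ∈ A := mem_image_of_mem f hi
  have h1 : (Equiv.Set.sumCompl A).symm (f i) = Sum.inl ⟨f i, hfi⟩ :=
    Equiv.Set.sumCompl_symm_apply_of_mem hfi
  have h2 : e₁ ⟨f i, hfi⟩ = ⟨g i, mem_image_of_mem g hi⟩ := by rw [he₁]; exact key i hi
  simp only [Equiv.trans_apply, h1, Equiv.sumCongr_apply, Sum.map_inl, h2,
    Equiv.Set.sumCompl_apply_inl]


open Set in
lemma part1 {X : Type} [Countable X] [Infinite X]
    (β : Equiv.Perm X) (hβ : SimplyTransitive β)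
    (n m : ℤ) (hn : n ≠ 0) (hm : m ≠ 0) (α' : Equiv.Perm X) (F : Set X) (hF : F.Finite) :
    ∃ α : Equiv.Perm X, (∀ x ∈ F, α x = α' x) ∧
      ∀ x y : X, ∃ h ∈ Subgroup.closure ({α ^ n, β ^ m} : Set (Equiv.Perm X)), h x = y := by
  classical
  have x₀ : X := Classical.arbitrary X
  set e : ℤ → X := fun j => (β ^ j) x₀ with he
  have he_inj : Function.Injective e := by
    intro i j hij
    obtain ⟨t, _, hu⟩ := hβ x₀ (e j)
    have hi : i = t := hu i hij
    have hj : j = t := hu j rfl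
    rw [hi, hj]
  have he_surj : ∀ x : X, ∃ j, e j = x := fun x => ((hβ x₀ x).exists)
  have he_step : ∀ (t j : ℤ), (β ^ t) (e j) = e (j + t) := by
    intro t j
    simp only [he, ← Equiv.Perm.mul_apply, ← zpow_add, add_comm]
  set N := n.natAbs with hNdef
  set M := m.natAbs with hMdef
  have hN : 1 ≤ N := Int.natAbs_pos.mpr hn
  have hM : 1 ≤ M := Int.natAbs_pos.mpr hm
  have hMz : ((M : ℤ)) ≠ 0 := by exact_mod_cast Nat.one_le_iff_ne_zero.mp hM
  -- the finite "forbidden" set and a bound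
  set S : Set X := F ∪ (⇑α' '' F) with hSdef
  have hS : S.Finite := hF.union (hF.image _)
  have hT : (e ⁻¹' S).Finite := hS.preimage (he_inj.injOn)
  obtain ⟨b, hb⟩ := hT.bddAbove
  set B : ℤ := |b| + 1 with hBdef
  have hB0 : 0 ≤ B := by positivity
  have hBS : ∀ j : ℤ, B ≤ j → e j ∉ S := by
    intro j hj hmem
    have := hb hmem
    have : j ≤ |b| := le_trans this (le_abs_self b)
    omega
  -- chain indices
  set J : ℕ → ℕ → ℤ := fun k i =>
    (if i = N then (k : ℤ) + 1 else (k : ℤ)) + (M : ℤ) * (B + k * (N + 1) + i) with hJdef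
  have hJ_big : ∀ k i : ℕ, B ≤ J k i := by
    intro k i
    have h1 : (0:ℤ) ≤ if i = N then (k : ℤ) + 1 else (k : ℤ) := by
      split <;> positivity
    have h2 : (B : ℤ) ≤ B + k * (N + 1) + i := by
      have : (0:ℤ) ≤ (k:ℤ) * ((N:ℤ) + 1) + i := by positivity
      linarith
    have h3 : (1:ℤ) ≤ (M:ℤ) := by exact_mod_cast hM
    have h4 : (0:ℤ) ≤ B + k * (N + 1) + i := by linarith
    have h5 : (1:ℤ) * (B + k * (N + 1) + i) ≤ (M:ℤ) * (B + k * (N + 1) + i) :=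
      mul_le_mul_of_nonneg_right h3 h4
    simp only [hJdef]
    linarith
  have hJ_notS : ∀ k i : ℕ, e (J k i) ∉ S := fun k i => hBS _ (hJ_big k i)
  have hJ_inj : ∀ k i k' i' : ℕ, k + 1 < M → i ≤ N → k' + 1 < M → i' ≤ N →
      J k i = J k' i' → k = k' ∧ i = i' := by
    intro k i k' i' hk hi hk' hi' heq
    set r : ℤ := if i = N then (k : ℤ) + 1 else (k : ℤ) with hr
    set r' : ℤ := if i' = N then (k' : ℤ) + 1 else (k' : ℤ) with hr'
    have hrange : 0 ≤ r ∧ r < M := by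
      constructor
      · rw [hr]; split <;> positivity
      · rw [hr]; split
        · exact_mod_cast by omega
        · exact_mod_cast by omega
    have hrange' : 0 ≤ r' ∧ r' < M := by
      constructor
      · rw [hr']; split <;> positivity
      · rw [hr']; split
        · exact_mod_cast by omega
        · exact_mod_cast by omega
    have hdvd : (M:ℤ) ∣ (r - r') := by
      refine ⟨(B + k' * (N + 1) + i') - (B + k * (N + 1) + i), ?_⟩
      have : r + (M : ℤ) * (B + k * (N + 1) + i) = r' + (M:ℤ) * (B + k' * (N + 1) + i') := heq
      linarith [this, (mul_sub ((M:ℤ)) (B + k' * (N + 1) + i') (B + k * (N + 1) + i))]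
    have hzero : r - r' = 0 := Int.eq_zero_of_abs_lt_dvd hdvd (by
      rw [abs_sub_lt_iff]; omega)
    have hr_eq : r = r' := by omega
    have hmul : (M:ℤ) * (B + k * (N + 1) + i) = (M:ℤ) * (B + k' * (N + 1) + i') := by
      have : r + (M : ℤ) * (B + k * (N + 1) + i) = r' + (M:ℤ) * (B + k' * (N + 1) + i') := heq
      omega
    have hu : (k : ℤ) * (N + 1) + i = (k' : ℤ) * (N + 1) + i' :=
      by have := mul_left_cancel₀ hMz hmul; linarith
    have hunat : k * (N + 1) + i = k' * (N + 1) + i' := by exact_mod_cast hu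
    -- base (N+1) uniqueness
    have hkk : k = k' := by
      rcases lt_trichotomy k k' with h | h | h
      · exfalso
        have : (k + 1) * (N + 1) ≤ k' * (N + 1) := Nat.mul_le_mul_right _ (by omega)
        nlinarith
      · exact h
      · exfalso
        have : (k' + 1) * (N + 1) ≤ k * (N + 1) := Nat.mul_le_mul_right _ (by omega)
        nlinarith
    refine ⟨hkk, by subst hkk; omega⟩
  set pt : ℕ → ℕ → X := fun k i => e (J k i) with hpt
  -- build the partial data
  set idx : Set (ℕ × ℕ) := {p : ℕ × ℕ | p.1 + 1 < M ∧ p.2 < N} with hidx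
  have hidxfin : idx.Finite := by
    apply Set.Finite.subset ((Set.finite_Iio M).prod (Set.finite_Iio N))
    rintro ⟨k, i⟩ ⟨h1, h2⟩
    exact ⟨by simpa using by omega, by simpa using h2⟩
  set s : Set (X ⊕ ℕ × ℕ) := (Sum.inl '' F) ∪ (Sum.inr '' idx) with hs
  have hsfin : s.Finite := (hF.image _).union (hidxfin.image _)
  set f : X ⊕ ℕ × ℕ → X := Sum.elim id (fun p => pt p.1 p.2) with hfd
  set g : X ⊕ ℕ × ℕ → X := Sum.elim ⇑α' (fun p => pt p.1 (p.2 + 1)) with hgd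
  have hmemidx : ∀ p : ℕ × ℕ, p ∈ idx → p.1 + 1 < M ∧ p.2 < N := fun p hp => hp
  have hptinj : ∀ p q : ℕ × ℕ, p ∈ idx → q ∈ idx → ∀ a b : ℕ, a ≤ N → b ≤ N →
      pt p.1 a = pt q.1 b → p.1 = q.1 ∧ a = b := by
    intro p q hp hq a b ha hb hpq
    exact hJ_inj p.1 a q.1 b (hmemidx p hp).1 ha (hmemidx q hq).1 hb (he_inj hpq)
  have hf_inj : Set.InjOn f s := by
    rintro u hu v hv huv
    rcases hu with ⟨x, hx, rfl⟩ | ⟨p, hp, rfl⟩ <;> rcases hv with ⟨y, hy, rfl⟩ | ⟨q, hq, rfl⟩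
    · simpa using (show x = y from huv)
    · exact absurd (hSdef ▸ Or.inl hx : (f (Sum.inl x)) ∈ S)
        (by rw [huv]; exact hJ_notS q.1 q.2)
    · exact absurd (hSdef ▸ Or.inl hy : (f (Sum.inl y)) ∈ S)
        (by rw [← huv]; exact hJ_notS p.1 p.2)
    · obtain ⟨h1, h2⟩ := hptinj p q hp hq p.2 q.2 (le_of_lt (hmemidx p hp).2)
        (le_of_lt (hmemidx q hq).2) huv
      have : p = q := Prod.ext h1 h2
      rw [this]
  have hg_inj : Set.InjOn g s := by
    rintro u hu v hv huv
    rcases hu with ⟨x, hx, rfl⟩ | ⟨p, hp, rfl⟩ <;> rcases hv with ⟨y, hy, rfl⟩ | ⟨q, hq, rfl⟩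
    · have : α' x = α' y := huv
      simpa using α'.injective this
    · exact absurd (hSdef ▸ Or.inr (mem_image_of_mem _ hx) : (g (Sum.inl x)) ∈ S)
        (by rw [huv]; exact hJ_notS q.1 (q.2+1))
    · exact absurd (hSdef ▸ Or.inr (mem_image_of_mem _ hy) : (g (Sum.inl y)) ∈ S)
        (by rw [← huv]; exact hJ_notS p.1 (p.2+1))
    · obtain ⟨h1, h2⟩ := hptinj p q hp hq (p.2+1) (q.2+1) (hmemidx p hp).2 (hmemidx q hq).2 huv
      have : p = q := Prod.ext h1 (by omega)
      rw [this]
  obtain ⟨α, hα⟩ := extendPairs s hsfin f g hf_inj hg_inj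
  have hαF : ∀ x ∈ F, α x = α' x := by
    intro x hx
    exact hα (Sum.inl x) (Or.inl (mem_image_of_mem _ hx))
  have hchain : ∀ k i : ℕ, k + 1 < M → i < N → α (pt k i) = pt k (i + 1) := by
    intro k i hk hi
    exact hα (Sum.inr (k, i)) (Or.inr (mem_image_of_mem _ ⟨hk, hi⟩))
  refine ⟨α, hαF, ?_⟩
  set H := Subgroup.closure ({α ^ n, β ^ m} : Set (Equiv.Perm X)) with hH
  have hβm : β ^ m ∈ H := Subgroup.subset_closure (by simp)
  have hαn : α ^ n ∈ H := Subgroup.subset_closure (by simp)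
  have hαN : α ^ N ∈ H := by
    rcases Int.natAbs_eq n with h | h
    · have : α ^ n = α ^ N := by rw [h, zpow_natCast]
      rw [← this]; exact hαn
    · have : α ^ n = (α ^ N)⁻¹ := by rw [h, zpow_neg, zpow_natCast]
      have h2 : α ^ N = (α ^ n)⁻¹ := by rw [this, inv_inv]
      rw [h2]; exact H.inv_mem hαn
  have hβmt : ∀ t : ℤ, β ^ (m * t) ∈ H := by
    intro t
    rw [zpow_mul]
    exact Subgroup.zpow_mem H hβm t
  have hchainN : ∀ k : ℕ, k + 1 < M → (α ^ N) (pt k 0) = pt k N := by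
    intro k hk
    have aux : ∀ i : ℕ, i ≤ N → (α ^ i) (pt k 0) = pt k i := by
      intro i
      induction i with
      | zero => intro _; simp
      | succ i ih =>
        intro hi
        rw [pow_succ', Equiv.Perm.mul_apply, ih (by omega)]
        exact hchain k i hk (by omega)
    exact aux N le_rfl
  -- reachability via β powers
  have rmod : ∀ j j' : ℤ, (M : ℤ) ∣ (j' - j) → ∃ h ∈ H, h (e j) = e j' := by
    intro j j' hd
    have hd' : m ∣ (j' - j) := by
      rw [hMdef] at hd
      rwa [Int.natAbs_dvd] at hd
    obtain ⟨t, ht⟩ := hd'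
    refine ⟨β ^ (m * t), hβmt t, ?_⟩
    rw [he_step]
    congr 1
    omega
  have hJk0 : ∀ k : ℕ, k + 1 < M → J k 0 % (M : ℤ) = (k : ℤ) := by
    intro k hk
    have h0 : (0:ℕ) ≠ N := by omega
    have : J k 0 = (k : ℤ) + (M:ℤ) * (B + k * (N + 1) + 0) := by
      simp only [hJdef, if_neg h0]
      push_cast
      ring
    rw [this, Int.add_mul_emod_self_left]
    exact Int.emod_eq_of_lt (by positivity) (by exact_mod_cast (by omega : k < M))
  have hJkN : ∀ k : ℕ, k + 1 < M → J k N % (M : ℤ) = (k : ℤ) + 1 := by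
    intro k hk
    have : J k N = ((k : ℤ) + 1) + (M:ℤ) * (B + k * (N + 1) + N) := by
      simp only [hJdef, if_pos rfl]
      simp
    rw [this, Int.add_mul_emod_self_left]
    exact Int.emod_eq_of_lt (by positivity) (by exact_mod_cast hk)
  have main : ∀ k : ℕ, (k : ℤ) < M → ∀ j : ℤ, j % (M : ℤ) = (k : ℤ) →
      ∃ h ∈ H, h (e 0) = e j := by
    intro k
    induction k with
    | zero =>
      intro _ j hj
      push_cast at hj ⊢
      apply rmod 0 j
      rw [Int.dvd_iff_emod_eq_zero, sub_zero]
      exact hj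
    | succ k ih =>
      intro hkM j hj
      have hk1 : k + 1 < M := by exact_mod_cast hkM
      obtain ⟨h₁, hh₁, hh₁e⟩ := ih (by exact_mod_cast Nat.lt_of_succ_lt hk1) (J k 0) (hJk0 k hk1)
      obtain ⟨h₃, hh₃, hh₃e⟩ := rmod (J k N) j (by
        have := hJkN k hk1
        rw [Int.dvd_iff_emod_eq_zero, Int.sub_emod, this, hj]
        push_cast
        simp)
      refine ⟨h₃ * (α ^ N) * h₁, H.mul_mem (H.mul_mem hh₃ hαN) hh₁, ?_⟩
      rw [Equiv.Perm.mul_apply, Equiv.Perm.mul_apply, hh₁e]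
      have : (α ^ N) (e (J k 0)) = e (J k N) := hchainN k hk1
      rw [this, hh₃e]
  have reach0 : ∀ x : X, ∃ h ∈ H, h (e 0) = x := by
    intro x
    obtain ⟨j, hj⟩ := he_surj x
    have hMpos : (0:ℤ) < (M:ℤ) := by exact_mod_cast hM
    have h1 : 0 ≤ j % (M:ℤ) := Int.emod_nonneg j hMz
    have h2 : j % (M:ℤ) < M := Int.emod_lt_of_pos j hMpos
    obtain ⟨h, hh, hhe⟩ := main (j % (M:ℤ)).natAbs (by omega) j (by omega)
    exact ⟨h, hh, by rw [hhe, hj]⟩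
  intro x y
  obtain ⟨h₁, hh₁, hh₁e⟩ := reach0 x
  obtain ⟨h₂, hh₂, hh₂e⟩ := reach0 y
  refine ⟨h₂ * h₁⁻¹, H.mul_mem hh₂ (H.inv_mem hh₁), ?_⟩
  rw [Equiv.Perm.mul_apply, ← hh₁e, (show h₁⁻¹ (h₁ (e 0)) = e 0 from h₁.symm_apply_apply _), hh₂e]

open Set in
lemma symTop_nbhd {X : Type} (U : Set (Equiv.Perm X)) (hU : @IsOpen _ (symTop X) U)
    (z : Equiv.Perm X) (hz : z ∈ U) :
    ∃ F : Set X, F.Finite ∧ ∀ w : Equiv.Perm X, (∀ x ∈ F, w x = z x) → w ∈ U := by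
  classical
  letI tX : TopologicalSpace X := ⊥
  haveI : DiscreteTopology X := ⟨rfl⟩
  rw [symTop, isOpen_induced_iff] at hU
  obtain ⟨V, hV, rfl⟩ := hU
  have hzV : ((z : X → X), ((z⁻¹ : Equiv.Perm X) : X → X)) ∈ V := hz
  have hVn : V ∈ nhds ((z : X → X), ((z⁻¹ : Equiv.Perm X) : X → X)) := hV.mem_nhds hzV
  rw [nhds_prod_eq] at hVn
  obtain ⟨V₁, hV₁, V₂, hV₂, hsub⟩ := Filter.mem_prod_iff.mp hVn
  rw [nhds_pi] at hV₁ hV₂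
  obtain ⟨I₁, hI₁fin, t₁, ht₁, ht₁sub⟩ := Filter.mem_pi.mp hV₁
  obtain ⟨I₂, hI₂fin, t₂, ht₂, ht₂sub⟩ := Filter.mem_pi.mp hV₂
  refine ⟨I₁ ∪ (⇑(z⁻¹ : Equiv.Perm X) '' I₂), hI₁fin.union (hI₂fin.image _), fun w hw => ?_⟩
  have hw1 : (w : X → X) ∈ V₁ := by
    apply ht₁sub
    intro i hi
    rw [hw i (Or.inl hi)]
    have := ht₁ i
    rwa [nhds_discrete, Filter.mem_pure] at this
  have hw2 : ((w⁻¹ : Equiv.Perm X) : X → X) ∈ V₂ := by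
    apply ht₂sub
    intro i hi
    have hwz : w ((z⁻¹ : Equiv.Perm X) i) = i := by
      rw [hw _ (Or.inr (mem_image_of_mem _ hi))]
      exact z.apply_symm_apply i
    have : (w⁻¹ : Equiv.Perm X) i = (z⁻¹ : Equiv.Perm X) i := by
      conv_lhs => rw [← hwz]
      exact w.symm_apply_apply _
    rw [this]
    have := ht₂ i
    rwa [nhds_discrete, Filter.mem_pure] at this
  exact hsub (Set.mk_mem_prod hw1 hw2)

/-- For `β` simply transitive and nonzero integers `n, m`: any `α'` can be modified outside a
finite set `F` to an `α` such that `⟨αⁿ, βᵐ⟩` acts transitively on `X`; consequently, for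
each nonzero `n, m` the set of `α` for which `⟨αⁿ, βᵐ⟩` does not act transitively has empty
interior in `Sym(X)`. -/
theorem transitive_power_modification {X : Type} [Countable X] [Infinite X]
    (β : Equiv.Perm X) (hβ : SimplyTransitive β) :
    (∀ n m : ℤ, n ≠ 0 → m ≠ 0 → ∀ (α' : Equiv.Perm X) (F : Set X), F.Finite →
      ∃ α : Equiv.Perm X, (∀ x ∈ F, α x = α' x) ∧
        ∀ x y : X, ∃ h ∈ Subgroup.closure ({α ^ n, β ^ m} : Set (Equiv.Perm X)), h x = y) ∧
    (∀ n m : ℤ, n ≠ 0 → m ≠ 0 →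
      @interior (Equiv.Perm X) (symTop X)
        {α : Equiv.Perm X |
          ¬ ∀ x y : X, ∃ h ∈ Subgroup.closure ({α ^ n, β ^ m} : Set (Equiv.Perm X)), h x = y}
        = ∅) := by
  constructor
  · exact fun n m hn hm α' F hF => part1 β hβ n m hn hm α' F hF
  · intro n m hn hm
    by_contra hne
    obtain ⟨z, hz⟩ := Set.nonempty_iff_ne_empty.mpr hne
    letI := symTop X
    have hop : IsOpen (interior
          {α : Equiv.Perm X |
            ¬ ∀ x y : X, ∃ h ∈ Subgroup.closure ({α ^ n, β ^ m} : Set (Equiv.Perm X)), h x = y}) :=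
      isOpen_interior
    obtain ⟨F, hFfin, hFnb⟩ := symTop_nbhd _ hop z hz
    obtain ⟨α, hαF, htrans⟩ := part1 β hβ n m hn hm z F hFfin
    have hmem := hFnb α hαF
    have hbad : α ∈ {α : Equiv.Perm X |
        ¬ ∀ x y : X, ∃ h ∈ Subgroup.closure ({α ^ n, β ^ m} : Set (Equiv.Perm X)), h x = y} :=
      interior_subset hmem
    exact hbad htrans
end

section
/- Let X be a countably infinite set, let τ ∈ Sym(X), and let (A_n) be a sequence of pairwise disjoint nonempty finite subsets of Fix(τ) = {x ∈ X : τ(x) = x}. Let Z be the centralizer of τ in Sym(X), with the subspace topology. Then the set 𝒪₂ of all σ ∈ Z such that σ(A_n) = A_n for infinitely many n is generic (comeagre) in Z. -/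
open Topology Filter

private lemma perm_comm_of_support {X : Type} (τ π : Equiv.Perm X) (S : Set X)
    (hS : ∀ x ∈ S, τ x = x) (hsupp : ∀ x, x ∉ S → π x = x) : π * τ = τ * π := by
  ext x
  simp only [Equiv.Perm.mul_apply]
  by_cases hx : τ x = x
  · rw [hx]
    by_cases hπ : π x ∈ S
    · exact (hS _ hπ).symm
    · have h1 : π (π x) = π x := hsupp _ hπ
      have h2 : π x = x := π.injective h1
      rw [h2, hx]
  · have hxS : x ∉ S := fun h => hx (hS x h)
    have hτ : τ x ∉ S := fun h => hx (τ.injective (hS _ h))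
    rw [hsupp _ hτ, hsupp x hxS]

private lemma exists_perm_finset {X : Type} : ∀ (n : ℕ) (s t : Finset X), s.card = n → t.card = n →
    ∃ π : Equiv.Perm X, (∀ x, x ∉ s → x ∉ t → π x = x) ∧ ⇑π '' ↑s = ↑t := by
  classical
  intro n
  induction n with
  | zero =>
    intro s t hs ht
    rw [Finset.card_eq_zero] at hs ht
    subst hs; subst ht
    exact ⟨1, fun x _ _ => rfl, by simp⟩
  | succ m ih =>
    intro s t hs ht
    obtain ⟨a, ha⟩ : s.Nonempty := Finset.card_pos.mp (by omega)
    obtain ⟨b, hb⟩ : t.Nonempty := Finset.card_pos.mp (by omega)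
    obtain ⟨π', hsupp', himg'⟩ := ih (s.erase a) (t.erase b)
      (by rw [Finset.card_erase_of_mem ha, hs]; omega)
      (by rw [Finset.card_erase_of_mem hb, ht]; omega)
    set c := π' a with hc
    have hcnotin : c ∉ t.erase b := by
      intro hcmem
      have h1 : c ∈ ⇑π' '' ↑(s.erase a) := by rw [himg']; exact_mod_cast hcmem
      obtain ⟨y, hy, hyc⟩ := h1
      have hya : y = a := π'.injective hyc
      rw [hya] at hy
      have : a ∈ s.erase a := by exact_mod_cast hy
      exact (Finset.mem_erase.mp this).1 rfl
    refine ⟨Equiv.swap c b * π', ?_, ?_⟩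
    · intro x hxs hxt
      have h1 : π' x = x := hsupp' x (fun h => hxs (Finset.mem_of_mem_erase h))
        (fun h => hxt (Finset.mem_of_mem_erase h))
      have hxb : x ≠ b := fun h => hxt (h ▸ hb)
      have hxc : x ≠ c := by
        intro h
        exact hxs (by rw [show x = a from π'.injective (h1.trans h)]; exact ha)
      simp [Equiv.Perm.mul_apply, h1, Equiv.swap_apply_of_ne_of_ne hxc hxb]
    · have hs' : (↑s : Set X) = insert a ↑(s.erase a) := by
        rw [← Finset.coe_insert, Finset.insert_erase ha]
      have ht' : (↑t : Set X) = insert b ↑(t.erase b) := by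
        rw [← Finset.coe_insert, Finset.insert_erase hb]
      rw [Equiv.Perm.coe_mul, Set.image_comp, hs', Set.image_insert_eq, himg', ← hc,
        Set.image_insert_eq, Equiv.swap_apply_left, ht']
      congr 1
      have hall : ∀ y ∈ (↑(t.erase b) : Set X), Equiv.swap c b y = y := by
        intro y hy
        refine Equiv.swap_apply_of_ne_of_ne ?_ ?_
        · rintro rfl; exact hcnotin (by exact_mod_cast hy)
        · rintro rfl
          exact (Finset.mem_erase.mp (by exact_mod_cast hy)).1 rfl
      rw [Set.image_congr hall]; simp

private lemma bad_finite {X : Type} [Infinite X] (A : ℕ → Finset X)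
    (hdisj : Pairwise (Function.onFun Disjoint A)) (H : Finset X) :
    {m : ℕ | ¬ Disjoint (A m) H}.Finite := by
  classical
  set f : ℕ → X := fun m => if h : ∃ x, x ∈ A m ∧ x ∈ H then h.choose else Classical.arbitrary X
    with hf
  have hmem : ∀ m ∈ {m : ℕ | ¬ Disjoint (A m) H}, f m ∈ A m ∧ f m ∈ H := by
    intro m hm
    rw [Set.mem_setOf_eq, Finset.not_disjoint_iff] at hm
    have hm' : ∃ x, x ∈ A m ∧ x ∈ H := hm
    simp only [hf, dif_pos hm']
    exact hm'.choose_spec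
  apply Set.Finite.of_finite_image (f := f)
  · exact H.finite_toSet.subset (by rintro _ ⟨m, hm, rfl⟩; exact (hmem m hm).2)
  · intro m₁ h₁ m₂ h₂ heq
    by_contra hne'
    exact (Finset.disjoint_left.mp (hdisj hne')) (hmem m₁ h₁).1 (heq ▸ (hmem m₂ h₂).1)



/-- Proposition 4.3: let `τ ∈ Sym(X)` and let `(A_n)` be pairwise disjoint nonempty finite
subsets of `Fix(τ)`. Then the set `𝒪₂` of those `σ` in the centralizer `Z` of `τ` with
`σ(A_n) = A_n` for infinitely many `n` is comeagre in `Z` (with its subspace topology). -/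
theorem O2_generic {X : Type} [Countable X] [Infinite X]
    (τ : Equiv.Perm X) (A : ℕ → Finset X)
    (hne : ∀ n, (A n).Nonempty)
    (hdisj : Pairwise (Function.onFun Disjoint A))
    (hfix : ∀ n, ∀ x ∈ A n, τ x = x) :
    {σ : {σ : Equiv.Perm X // σ * τ = τ * σ} |
        {n : ℕ | σ.val '' (A n : Set X) = (A n : Set X)}.Infinite}
      ∈ @residual {σ : Equiv.Perm X // σ * τ = τ * σ}
          (TopologicalSpace.induced Subtype.val (symTop X)) := by
  classical
  letI tX : TopologicalSpace X := ⊥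
  haveI : DiscreteTopology X := ⟨rfl⟩
  letI tZ : TopologicalSpace {σ : Equiv.Perm X // σ * τ = τ * σ} :=
    TopologicalSpace.induced Subtype.val (symTop X)
  show {σ : {σ : Equiv.Perm X // σ * τ = τ * σ} |
      {n : ℕ | σ.val '' (↑(A n) : Set X) = ↑(A n)}.Infinite}
    ∈ @residual {σ : Equiv.Perm X // σ * τ = τ * σ} tZ
  -- continuity of evaluation
  have hembcont : Continuous (fun σ : {σ : Equiv.Perm X // σ * τ = τ * σ} => ((⇑σ.val : X → X), (⇑(σ.val⁻¹) : X → X))) := by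
    have h1 : @Continuous _ _ tZ (symTop X) (Subtype.val : {σ : Equiv.Perm X // σ * τ = τ * σ} → Equiv.Perm X) :=
      continuous_induced_dom
    have h2 : @Continuous _ _ (symTop X)
        (@instTopologicalSpaceProd _ _ (@Pi.topologicalSpace X (fun _ => X) fun _ => ⊥)
          (@Pi.topologicalSpace X (fun _ => X) fun _ => ⊥))
        (fun σ : Equiv.Perm X => ((⇑σ : X → X), (⇑σ⁻¹ : X → X))) := continuous_induced_dom
    exact @Continuous.comp _ _ _ tZ (symTop X) _ _ _ h2 h1
  have hev : ∀ x : X, Continuous (fun σ : {σ : Equiv.Perm X // σ * τ = τ * σ} => σ.val x) :=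
    fun x => (continuous_apply x).comp (continuous_fst.comp hembcont)
  -- characterization of the fixing condition
  have hSeq : ∀ (n : ℕ) (σ : Equiv.Perm X),
      (⇑σ '' ↑(A n) = (↑(A n) : Set X)) ↔ (∀ x ∈ A n, σ x ∈ A n) := by
    intro n σ
    constructor
    · intro h x hx
      have hmem : σ x ∈ ⇑σ '' ↑(A n) := ⟨x, hx, rfl⟩
      rw [h] at hmem; exact_mod_cast hmem
    · intro h
      have himg : (A n).image σ = A n := Finset.eq_of_subset_of_card_le
        (fun y hy => by obtain ⟨x, hx, rfl⟩ := Finset.mem_image.mp hy; exact h x hx)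
        (Finset.card_image_of_injective _ σ.injective).ge
      calc ⇑σ '' ↑(A n) = ↑((A n).image σ) := (Finset.coe_image).symm
        _ = ↑(A n) := by rw [himg]
  have hSopen : ∀ n, IsOpen {σ : {σ : Equiv.Perm X // σ * τ = τ * σ} | ∀ x ∈ A n, σ.val x ∈ A n} := by
    intro n
    have heq : {σ : {σ : Equiv.Perm X // σ * τ = τ * σ} | ∀ x ∈ A n, σ.val x ∈ A n}
        = ⋂ x ∈ A n, (fun σ : {σ : Equiv.Perm X // σ * τ = τ * σ} => σ.val x) ⁻¹' ↑(A n) := by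
      ext σ; simp
    rw [heq]
    exact isOpen_biInter_finset fun x _ => (isOpen_discrete _).preimage (hev x)
  have hUdense : ∀ N : ℕ,
      Dense (⋃ n, ⋃ (_ : N ≤ n),
        {σ : {σ : Equiv.Perm X // σ * τ = τ * σ} | ∀ x ∈ A n, σ.val x ∈ A n}) := by
    intro N
    rw [dense_iff_inter_open]
    rintro U hU ⟨σ₀, hσ₀U⟩
    obtain ⟨V, hV, hVU⟩ := (@isOpen_induced_iff _ _ (symTop X) U Subtype.val).mp hU
    obtain ⟨W, hW, hWV⟩ := (@isOpen_induced_iff _ _ _ V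
      (fun σ : Equiv.Perm X => ((⇑σ : X → X), (⇑σ⁻¹ : X → X)))).mp hV
    have hσ₀V : σ₀.val ∈ V := by rw [← hVU] at hσ₀U; exact hσ₀U
    have hpair : (((⇑σ₀.val : X → X), (⇑(σ₀.val⁻¹) : X → X)) : (X → X) × (X → X)) ∈ W := by
      rw [← hWV] at hσ₀V; exact hσ₀V
    obtain ⟨W₁, W₂, hW₁, hW₂, hf₁, hf₂, hprod⟩ := isOpen_prod_iff.mp hW _ _ hpair
    have hn₁ : W₁ ∈ 𝓝 (⇑σ₀.val : X → X) := hW₁.mem_nhds hf₁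
    have hn₂ : W₂ ∈ 𝓝 (⇑(σ₀.val⁻¹) : X → X) := hW₂.mem_nhds hf₂
    rw [nhds_pi] at hn₁ hn₂
    obtain ⟨I₁, hI₁fin, t₁, ht₁, hsub₁⟩ := Filter.mem_pi.mp hn₁
    obtain ⟨I₂, hI₂fin, t₂, ht₂, hsub₂⟩ := Filter.mem_pi.mp hn₂
    set F₁ := hI₁fin.toFinset with hF₁
    set F₂ := hI₂fin.toFinset with hF₂
    set H : Finset X := F₁ ∪ F₂ ∪ F₁.image ⇑σ₀.val ∪ F₂.image ⇑(σ₀.val⁻¹) with hH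
    have hsubF₁ : F₁ ⊆ H := by intro x hx; simp only [hH, Finset.mem_union]; tauto
    have hsubF₂ : F₂ ⊆ H := by intro x hx; simp only [hH, Finset.mem_union]; tauto
    have hsubim₁ : F₁.image ⇑σ₀.val ⊆ H := by
      intro x hx; simp only [hH, Finset.mem_union]; tauto
    have hsubim₂ : F₂.image ⇑(σ₀.val⁻¹) ⊆ H := by
      intro x hx; simp only [hH, Finset.mem_union]; tauto
    obtain ⟨M, hM⟩ := (bad_finite A hdisj H).bddAbove
    set n := max N (M + 1) with hn
    have hgood : Disjoint (A n) H := by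
      by_contra h
      have h1 : n ≤ M := hM h
      have h2 : M + 1 ≤ n := le_max_right _ _
      omega
    have hmemH : ∀ {x : X}, x ∈ H → x ∉ A n := fun hx hxA =>
      (Finset.disjoint_left.mp hgood) hxA hx
    obtain ⟨π, hπsupp, hπimg⟩ := exists_perm_finset (A n).card ((A n).image ⇑σ₀.val) (A n)
      (Finset.card_image_of_injective _ σ₀.val.injective) rfl
    have hστ : ∀ a ∈ A n, τ (σ₀.val a) = σ₀.val a := by
      intro a haA
      have h1 := congr_arg (fun g : Equiv.Perm X => g a) σ₀.prop
      simp only [Equiv.Perm.mul_apply] at h1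
      rw [hfix n a haA] at h1
      exact h1.symm
    have hfixS : ∀ x ∈ (↑((A n).image ⇑σ₀.val ∪ A n) : Set X), τ x = x := by
      intro x hx
      have hx' : x ∈ (A n).image ⇑σ₀.val ∪ A n := by exact_mod_cast hx
      rcases Finset.mem_union.mp hx' with h | h
      · obtain ⟨a, haA, rfl⟩ := Finset.mem_image.mp h
        exact hστ a haA
      · exact hfix n x h
    have hπτ : π * τ = τ * π := by
      refine perm_comm_of_support τ π (↑((A n).image ⇑σ₀.val ∪ A n)) hfixS ?_
      intro x hx
      refine hπsupp x (fun h => hx ?_) (fun h => hx ?_)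
      · exact_mod_cast Finset.mem_union_left _ h
      · exact_mod_cast Finset.mem_union_right _ h
    have hσZ : (π * σ₀.val) * τ = τ * (π * σ₀.val) := by
      calc (π * σ₀.val) * τ = π * (σ₀.val * τ) := by rw [mul_assoc]
        _ = π * (τ * σ₀.val) := by rw [σ₀.prop]
        _ = (π * τ) * σ₀.val := by rw [mul_assoc]
        _ = (τ * π) * σ₀.val := by rw [hπτ]
        _ = τ * (π * σ₀.val) := by rw [mul_assoc]
    have hval₁ : ∀ i ∈ I₁, (π * σ₀.val) i = σ₀.val i := by
      intro i hi
      have hiF : i ∈ F₁ := hI₁fin.mem_toFinset.mpr hi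
      have h1 : σ₀.val i ∉ (A n).image ⇑σ₀.val := by
        intro h
        obtain ⟨a, haA, hEq⟩ := Finset.mem_image.mp h
        have haa : a = i := σ₀.val.injective hEq
        exact hmemH (hsubF₁ hiF) (haa ▸ haA)
      have h2 : σ₀.val i ∉ A n :=
        hmemH (hsubim₁ (Finset.mem_image.mpr ⟨i, hiF, rfl⟩))
      simp only [Equiv.Perm.mul_apply]
      exact hπsupp _ h1 h2
    have hval₂ : ∀ i ∈ I₂, ((π * σ₀.val)⁻¹ : Equiv.Perm X) i = (σ₀.val⁻¹ : Equiv.Perm X) i := by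
      intro i hi
      have hiF : i ∈ F₂ := hI₂fin.mem_toFinset.mpr hi
      have hπi : π i = i := by
        apply hπsupp
        · intro h
          obtain ⟨a, haA, hEq⟩ := Finset.mem_image.mp h
          have haa : a = (σ₀.val⁻¹ : Equiv.Perm X) i := by
            rw [← hEq]; simp
          exact hmemH (hsubim₂ (Finset.mem_image.mpr ⟨i, hiF, rfl⟩)) (haa ▸ haA)
        · exact hmemH (hsubF₂ hiF)
      have hπinv : (π⁻¹ : Equiv.Perm X) i = i := by
        conv_lhs => rw [← hπi]
        simp
      rw [mul_inv_rev]
      simp only [Equiv.Perm.mul_apply, hπinv]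
    have hζfix : ∀ x ∈ A n, (π * σ₀.val) x ∈ A n := by
      intro x hx
      have hmem : σ₀.val x ∈ (↑((A n).image ⇑σ₀.val) : Set X) := by
        exact_mod_cast Finset.mem_image.mpr ⟨x, hx, rfl⟩
      have hres : π (σ₀.val x) ∈ (↑(A n) : Set X) := by
        rw [← hπimg]; exact ⟨_, hmem, rfl⟩
      simp only [Equiv.Perm.mul_apply]
      exact_mod_cast hres
    refine ⟨⟨π * σ₀.val, hσZ⟩, ?_, ?_⟩
    · rw [← hVU]
      show (π * σ₀.val) ∈ V
      rw [← hWV]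
      show (((⇑(π * σ₀.val) : X → X), (⇑((π * σ₀.val)⁻¹) : X → X)) : (X → X) × (X → X)) ∈ W
      apply hprod
      refine ⟨hsub₁ ?_, hsub₂ ?_⟩
      · intro i hi
        show (π * σ₀.val) i ∈ t₁ i
        rw [hval₁ i hi]
        exact mem_of_mem_nhds (ht₁ i)
      · intro i hi
        show ((π * σ₀.val)⁻¹ : Equiv.Perm X) i ∈ t₂ i
        rw [hval₂ i hi]
        exact mem_of_mem_nhds (ht₂ i)
    · refine Set.mem_iUnion.mpr ⟨n, Set.mem_iUnion.mpr ⟨le_max_left _ _, ?_⟩⟩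
      exact hζfix
  have hkey : (⋂ N : ℕ, ⋃ n, ⋃ (_ : N ≤ n), {σ : {σ : Equiv.Perm X // σ * τ = τ * σ} | ∀ x ∈ A n, σ.val x ∈ A n})
      ∈ @residual {σ : Equiv.Perm X // σ * τ = τ * σ} tZ :=
    countable_iInter_mem.mpr fun N => residual_of_dense_open
      (isOpen_iUnion fun n => isOpen_iUnion fun _ => hSopen n) (hUdense N)
  refine Filter.mem_of_superset hkey ?_
  intro σ hσ
  simp only [Set.mem_iInter, Set.mem_iUnion] at hσ
  show Set.Infinite _
  by_contra hfin
  rw [Set.not_infinite] at hfin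
  obtain ⟨M, hM⟩ := hfin.bddAbove
  obtain ⟨n, hn, hprop⟩ := hσ (M + 1)
  have hmem : n ∈ {n : ℕ | σ.val '' (↑(A n) : Set X) = ↑(A n)} := (hSeq n σ.val).mpr hprop
  have := hM hmem
  omega
end

section
/- For every element c of the free group F₂ on generators a and b, there exists an automorphism φ of F₂ such that φ(c) is a special word; in particular, φ(c) is weakly cyclically reduced and S_a(φ(c)) divides S_b(φ(c)) (the case S_a(φ(c)) = S_b(φ(c)) = 0 being included). -/
open FreeGroup

lemma expSum_one (t : Bool) : expSum t 1 = 0 := by simp [expSum]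

lemma expSum_mul (t : Bool) (x y : FreeGroup Bool) :
    expSum t (x * y) = expSum t x + expSum t y := by
  simp [expSum, map_mul]

lemma expSum_inv (t : Bool) (x : FreeGroup Bool) :
    expSum t x⁻¹ = - expSum t x := by
  simp [expSum, map_inv]

lemma expSum_zpow (t : Bool) (x : FreeGroup Bool) (k : ℤ) :
    expSum t (x ^ k) = k * expSum t x := by
  simp [expSum, map_zpow]

lemma expSum_of (t s : Bool) : expSum t (FreeGroup.of s) = if s = t then 1 else 0 := by
  simp [expSum]

lemma expSum_conj (t : Bool) (w x : FreeGroup Bool) :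
    expSum t (w * x * w⁻¹) = expSum t x := by
  simp [expSum_mul, expSum_inv]

/-- The Nielsen homomorphism `a ↦ a`, `b ↦ b * a^k`. -/
def Tk (k : ℤ) : FreeGroup Bool →* FreeGroup Bool :=
  FreeGroup.lift (fun t => if t then FreeGroup.of true * FreeGroup.of false ^ k
    else FreeGroup.of false)

lemma Tk_Tk (k : ℤ) (x : FreeGroup Bool) : Tk (-k) (Tk k x) = x := by
  have h : (Tk (-k)).comp (Tk k) = MonoidHom.id _ := by
    apply FreeGroup.ext_hom
    rintro (_ | _) <;>
      simp [Tk, _root_.map_mul, map_zpow, mul_assoc, ← zpow_add]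
  exact DFunLike.congr_fun h x

/-- The Nielsen automorphism `a ↦ a`, `b ↦ b * a^k`. -/
def TkE (k : ℤ) : FreeGroup Bool ≃* FreeGroup Bool where
  toFun := Tk k
  invFun := Tk (-k)
  left_inv x := Tk_Tk k x
  right_inv x := by simpa using Tk_Tk (-k) x
  map_mul' := _root_.map_mul _

lemma expSum_Tk (k : ℤ) (c : FreeGroup Bool) :
    expSum false (Tk k c) = expSum false c + k * expSum true c ∧
      expSum true (Tk k c) = expSum true c := by
  induction c using FreeGroup.induction_on with
  | C1 => simp [expSum_one]
  | of x =>
      cases x <;>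
        simp [Tk, FreeGroup.lift_apply_of, expSum_mul, expSum_zpow, expSum_of]
  | inv_of x ih =>
      simp only [_root_.map_inv, expSum_inv, ih.1, ih.2]
      exact ⟨by ring, trivial⟩
  | mul x y hx hy =>
      simp only [_root_.map_mul, expSum_mul, hx.1, hx.2, hy.1, hy.2]
      exact ⟨by ring, trivial⟩

/-- The swap automorphism `a ↔ b`. -/
def swapE : FreeGroup Bool ≃* FreeGroup Bool :=
  FreeGroup.freeGroupCongr ⟨Bool.not, Bool.not, Bool.not_not, Bool.not_not⟩

lemma expSum_swap (t : Bool) (c : FreeGroup Bool) :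
    expSum t (swapE c) = expSum (!t) c := by
  induction c using FreeGroup.induction_on with
  | C1 => simp [expSum_one]
  | of x =>
      have h : swapE (FreeGroup.of x) = FreeGroup.of (!x) := by
        simp [swapE]
      rw [h,
        expSum_of, expSum_of]
      cases x <;> cases t <;> simp
  | inv_of x ih => rw [_root_.map_inv, expSum_inv, expSum_inv, ih]
  | mul x y hx hy => rw [_root_.map_mul, expSum_mul, expSum_mul, hx, hy]

lemma claimA : ∀ n : ℕ, ∀ c : FreeGroup Bool, (expSum true c).natAbs = n →
    ∃ φ : FreeGroup Bool ≃* FreeGroup Bool, expSum true (φ c) = 0 := by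
  intro n
  induction n using Nat.strong_induction_on with
  | _ n ih =>
    intro c hn
    rcases eq_or_ne (expSum true c) 0 with h0 | h0
    · exact ⟨MulEquiv.refl _, h0⟩
    · set m := expSum false c with hm
      set nn := expSum true c with hnn
      set k : ℤ := -(m / nn) with hk
      set c' : FreeGroup Bool := swapE (TkE k c) with hc'
      have hTk : expSum false (TkE k c) = m + k * nn ∧ expSum true (TkE k c) = nn :=
        expSum_Tk k c
      have h1 : expSum true c' = m % nn := by
        rw [hc', expSum_swap, Bool.not_true, hTk.1, hk, Int.emod_def]
        ring
      have h2 : (expSum true c').natAbs < n := by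
        rw [h1, ← hn]
        have h3 : 0 ≤ m % nn := Int.emod_nonneg m h0
        have h4 : m % nn < |nn| := Int.emod_lt_abs m h0
        rw [Int.abs_eq_natAbs] at h4
        omega
      obtain ⟨ψ, hψ⟩ := ih _ h2 c' rfl
      exact ⟨(TkE k).trans (swapE.trans ψ), hψ⟩

lemma step_mk {L₁ L₂ : List (Bool × Bool)} (h : FreeGroup.Red.Step L₁ L₂) :
    FreeGroup.mk L₁ = FreeGroup.mk L₂ :=
  Quot.sound h

lemma claimB : ∀ n : ℕ, ∀ d : FreeGroup Bool, d.toWord.length = n →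
    ∃ w : FreeGroup Bool, WeaklyCyclicallyReduced (w * d * w⁻¹) := by
  intro n
  induction n using Nat.strong_induction_on with
  | _ n ih =>
    intro d hlen
    by_cases hwcr : WeaklyCyclicallyReduced d
    · exact ⟨1, by simpa using hwcr⟩
    · rw [WeaklyCyclicallyReduced] at hwcr
      push_neg at hwcr
      obtain ⟨x, hx, y, hy, hxy⟩ := hwcr
      rw [Option.mem_def] at hx hy
      obtain ⟨L', hL'⟩ := List.getLast?_eq_some_iff.1 hy
      cases L' with
      | nil =>
          rw [hL'] at hx
          simp only [List.nil_append, List.head?_cons, Option.some.injEq] at hx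
          rw [← hx] at hxy
          exact absurd (congrArg Prod.snd hxy) (by simp)
      | cons x' L =>
          rw [hL'] at hx
          simp only [List.cons_append, List.head?_cons, Option.some.injEq] at hx
          subst hx
          have htw : d.toWord = x' :: (L ++ [y]) := by simpa using hL'
          have key : FreeGroup.mk [y] * d * (FreeGroup.mk [y])⁻¹ = FreeGroup.mk L := by
            conv_lhs => rw [← FreeGroup.mk_toWord (x := d)]
            rw [htw, FreeGroup.inv_mk, FreeGroup.mul_mk, FreeGroup.mul_mk]
            have h1 : ([y] ++ (x' :: (L ++ [y])) ++ FreeGroup.invRev [y]) =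
                ([] ++ (y.1, y.2) :: (y.1, !y.2) ::
                  (L ++ ((y.1, y.2) :: (y.1, !y.2) :: []))) := by
              simp [FreeGroup.invRev, hxy]
            rw [h1]
            calc FreeGroup.mk ([] ++ (y.1, y.2) :: (y.1, !y.2) ::
                    (L ++ ((y.1, y.2) :: (y.1, !y.2) :: [])))
                = FreeGroup.mk ([] ++ (L ++ ((y.1, y.2) :: (y.1, !y.2) :: []))) :=
                  step_mk FreeGroup.Red.Step.not
              _ = FreeGroup.mk (L ++ ((y.1, y.2) :: (y.1, !y.2) :: [])) := by
                  rw [List.nil_append]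
              _ = FreeGroup.mk (L ++ []) := step_mk FreeGroup.Red.Step.not
              _ = FreeGroup.mk L := by rw [List.append_nil]
          have hlt : (FreeGroup.mk L).toWord.length < n := by
            rw [FreeGroup.toWord_mk]
            have h2 := FreeGroup.Red.length_le (FreeGroup.reduce.red (L := L))
            have h3 : d.toWord.length = L.length + 2 := by simp [htw]
            omega
          obtain ⟨w', hw'⟩ := ih _ hlt (FreeGroup.mk L) rfl
          refine ⟨w' * FreeGroup.mk [y], ?_⟩
          have heq : (w' * FreeGroup.mk [y]) * d * (w' * FreeGroup.mk [y])⁻¹ =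
              w' * (FreeGroup.mk [y] * d * (FreeGroup.mk [y])⁻¹) * w'⁻¹ := by group
          rw [heq, key]
          exact hw'

/-- Lemma 4.4: for every `c ∈ F₂` there is an automorphism `φ` of `F₂` such that `φ(c)` is a
special word; in particular `φ(c)` is weakly cyclically reduced and `S_a(φ(c))` divides
`S_b(φ(c))` (the case where both exponent sums vanish being included). -/
theorem exists_aut_special (c : FreeGroup Bool) :
    ∃ φ : FreeGroup Bool ≃* FreeGroup Bool,
      IsSpecial (φ c) ∧
      WeaklyCyclicallyReduced (φ c) ∧ expSum false (φ c) ∣ expSum true (φ c) := by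
  obtain ⟨φ₁, hφ₁⟩ := claimA (expSum true c).natAbs c rfl
  obtain ⟨w, hwcr⟩ := claimB (φ₁ c).toWord.length (φ₁ c) rfl
  refine ⟨φ₁.trans (MulAut.conj w), ?_, ?_, ?_⟩
  · refine ⟨?_, Or.inr ?_⟩
    · simpa [MulAut.conj_apply] using hwcr
    · have h0 : expSum true ((φ₁.trans (MulAut.conj w)) c) = 0 := by
        simpa [MulAut.conj_apply, expSum_conj] using hφ₁
      rw [h0]; exact dvd_zero _
  · simpa [MulAut.conj_apply] using hwcr
  · have h0 : expSum true ((φ₁.trans (MulAut.conj w)) c) = 0 := by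
      simpa [MulAut.conj_apply, expSum_conj] using hφ₁
    rw [h0]; exact dvd_zero _
end
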